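/- arXiv:1408.5494 — 12 statements merged into one kernel-verified Lean document; each statement's English description precedes it below -/
import Mathlib

section
/- Let n₁ ≥ 1 be an integer and K ∈ ℝ, and let (λ₁,…,λ_{n₁}, μ₁,…,μ_{n₁}) be a real-analytic solution of the system (ODE) on an open interval I ⊆ ℝ. Then for every t ∈ I the following polynomial identity holds: −(4/3)·Σ λᵢ(t)μᵢ(t)² − (2/3)·τ(t)·Σ μᵢ(t)² + (4/9)·(Σ μᵢ(t))·(Σ λᵢ(t)μᵢ(t)) + (4/3)·τ(t)·Σ λᵢ(t)² + (2/9)·τ(t)·(Σ μᵢ(t))² + (1/2)·τ(t)³ − (2/3)(2n+1)K·τ(t) = 0. -/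
/-!
Differentiating `τ = (2/3) Σ λᵢ` with (i) gives `τ' = (τ/3) Σ μᵢ + (2/3) Σ λᵢμᵢ`. Differentiating
once more with (i) and (ii) expresses `τ''` as a polynomial in the `λᵢ, μᵢ`; substituting both
into (iii) and eliminating `Σ λᵢ = (3/2) τ` leaves exactly the stated polynomial identity.
-/

open Finset Filter Topology

section BiharmonicODE

variable {n₁ : ℕ} {K : ℝ} {lam mu : Fin n₁ → ℝ → ℝ} {tau : ℝ → ℝ} {t : ℝ}

theorem hasDerivAt_sum_lam
    (hlam : ∀ i, HasDerivAt (lam i) ((tau t / 2 + lam i t) * mu i t) t) :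
    HasDerivAt (fun s => ∑ i, lam i s)
      (tau t / 2 * ∑ i, mu i t + ∑ i, lam i t * mu i t) t := by
  refine (HasDerivAt.fun_sum fun i _ => hlam i).congr_deriv ?_
  rw [mul_sum, ← sum_add_distrib]
  exact sum_congr rfl fun i _ => by ring

theorem hasDerivAt_tau (htau : ∀ s, tau s = (2/3) * ∑ i, lam i s)
    (hlam : ∀ i, HasDerivAt (lam i) ((tau t / 2 + lam i t) * mu i t) t) :
    HasDerivAt tau (tau t / 3 * ∑ i, mu i t + 2/3 * ∑ i, lam i t * mu i t) t := by
  refine (((hasDerivAt_sum_lam hlam).const_mul (2/3)).congr_of_eventuallyEq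
    (Eventually.of_forall htau)).congr_deriv ?_
  rw [htau]
  ring

theorem hasDerivAt_sum_mu
    (hmu : ∀ i, HasDerivAt (mu i) ((mu i t) ^ 2 - tau t / 2 * lam i t + K) t) :
    HasDerivAt (fun s => ∑ i, mu i s)
      (∑ i, (mu i t) ^ 2 - tau t / 2 * ∑ i, lam i t + n₁ * K) t := by
  refine (HasDerivAt.fun_sum fun i _ => hmu i).congr_deriv ?_
  rw [sum_add_distrib, sum_sub_distrib, ← mul_sum, sum_const, card_univ, Fintype.card_fin,
    nsmul_eq_mul]

theorem hasDerivAt_sum_lam_mul_mu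
    (hlam : ∀ i, HasDerivAt (lam i) ((tau t / 2 + lam i t) * mu i t) t)
    (hmu : ∀ i, HasDerivAt (mu i) ((mu i t) ^ 2 - tau t / 2 * lam i t + K) t) :
    HasDerivAt (fun s => ∑ i, lam i s * mu i s)
      (tau t / 2 * ∑ i, (mu i t) ^ 2 + 2 * ∑ i, lam i t * (mu i t) ^ 2
        - tau t / 2 * ∑ i, (lam i t) ^ 2 + K * ∑ i, lam i t) t := by
  refine (HasDerivAt.fun_sum fun i _ => (hlam i).mul (hmu i)).congr_deriv ?_
  simp only [mul_sum, ← sum_add_distrib, ← sum_sub_distrib]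
  exact sum_congr rfl fun i _ => by ring

/-- Since `τ'` is given by the same formula on a neighbourhood of `t`, `τ''(t)` is computed by
differentiating that formula. -/
theorem deriv_deriv_tau {I : Set ℝ} (hI : IsOpen I) (ht : t ∈ I)
    (htau : ∀ s, tau s = (2/3) * ∑ i, lam i s)
    (hlam : ∀ i, ∀ s ∈ I, HasDerivAt (lam i) ((tau s / 2 + lam i s) * mu i s) s)
    (hmu : ∀ i, ∀ s ∈ I, HasDerivAt (mu i) ((mu i s) ^ 2 - tau s / 2 * lam i s + K) s) :
    deriv (deriv tau) t =
      (tau t / 3 * ∑ i, mu i t + 2/3 * ∑ i, lam i t * mu i t) / 3 * ∑ i, mu i t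
      + tau t / 3 * (∑ i, (mu i t) ^ 2 - tau t / 2 * ∑ i, lam i t + n₁ * K)
      + 2/3 * (tau t / 2 * ∑ i, (mu i t) ^ 2 + 2 * ∑ i, lam i t * (mu i t) ^ 2
        - tau t / 2 * ∑ i, (lam i t) ^ 2 + K * ∑ i, lam i t) := by
  have hderiv : deriv tau =ᶠ[𝓝 t]
      fun s => tau s / 3 * ∑ i, mu i s + 2/3 * ∑ i, lam i s * mu i s :=
    eventually_of_mem (hI.mem_nhds ht) fun s hs =>
      (hasDerivAt_tau htau fun i => hlam i s hs).deriv
  rw [hderiv.deriv_eq]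
  exact ((((hasDerivAt_tau htau fun i => hlam i t ht).div_const 3).mul
    (hasDerivAt_sum_mu fun i => hmu i t ht)).add
    ((hasDerivAt_sum_lam_mul_mu (fun i => hlam i t ht) fun i => hmu i t ht).const_mul
      (2/3))).deriv

end BiharmonicODE

theorem stmt_0_general (n₁ : ℕ) (K : ℝ)
    (I : Set ℝ) (hI : IsOpen I)
    (lam mu : Fin n₁ → ℝ → ℝ)
    (tau : ℝ → ℝ) (htau : ∀ t, tau t = (2/3) * ∑ i, lam i t)
    (hode1 : ∀ i, ∀ t ∈ I, HasDerivAt (lam i) ((tau t / 2 + lam i t) * mu i t) t)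
    (hode2 : ∀ i, ∀ t ∈ I,
      HasDerivAt (mu i) ((mu i t) ^ 2 - tau t / 2 * lam i t + K) t)
    (hode3 : ∀ t ∈ I,
      -(deriv (deriv tau) t) + deriv tau t * (∑ i, mu i t)
        + tau t * ((tau t) ^ 2 / 4 - ((n₁ : ℝ) + 1) * K + ∑ i, (lam i t) ^ 2) = 0) :
    ∀ t ∈ I,
      -(4/3) * (∑ i, lam i t * (mu i t) ^ 2)
      - (2/3) * tau t * (∑ i, (mu i t) ^ 2)
      + (4/9) * (∑ i, mu i t) * (∑ i, lam i t * mu i t)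
      + (4/3) * tau t * (∑ i, (lam i t) ^ 2)
      + (2/9) * tau t * (∑ i, mu i t) ^ 2
      + (1/2) * (tau t) ^ 3
      - (2/3) * (2 * ((n₁ : ℝ) + 1) + 1) * K * tau t = 0 := by
  intro t ht
  have h := hode3 t ht
  rw [deriv_deriv_tau hI ht htau hode1 hode2,
    (hasDerivAt_tau htau fun i => hode1 i t ht).deriv] at h
  linear_combination h + ((tau t) ^ 2 / 4 - K) * htau t

/-- Lemma 5.1 (Lemma `P0`): any real-analytic solution of the ODE system on an
open interval satisfies the polynomial identity `P₀ = 0` pointwise. -/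
theorem stmt_0 (n₁ : ℕ) (hn : 1 ≤ n₁) (K : ℝ)
    (I : Set ℝ) (hI : IsOpen I) (hIconn : I.OrdConnected)
    (lam mu : Fin n₁ → ℝ → ℝ)
    (hlam : ∀ i, AnalyticOnNhd ℝ (lam i) I)
    (hmu : ∀ i, AnalyticOnNhd ℝ (mu i) I)
    (tau : ℝ → ℝ) (htau : ∀ t, tau t = (2/3) * ∑ i, lam i t)
    (hode1 : ∀ i, ∀ t ∈ I, HasDerivAt (lam i) ((tau t / 2 + lam i t) * mu i t) t)
    (hode2 : ∀ i, ∀ t ∈ I,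
      HasDerivAt (mu i) ((mu i t) ^ 2 - tau t / 2 * lam i t + K) t)
    (hode3 : ∀ t ∈ I,
      -(deriv (deriv tau) t) + deriv tau t * (∑ i, mu i t)
        + tau t * ((tau t) ^ 2 / 4 - ((n₁ : ℝ) + 1) * K + ∑ i, (lam i t) ^ 2) = 0) :
    ∀ t ∈ I,
      -(4/3) * (∑ i, lam i t * (mu i t) ^ 2)
      - (2/3) * tau t * (∑ i, (mu i t) ^ 2)
      + (4/9) * (∑ i, mu i t) * (∑ i, lam i t * mu i t)
      + (4/3) * tau t * (∑ i, (lam i t) ^ 2)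
      + (2/9) * tau t * (∑ i, mu i t) ^ 2
      + (1/2) * (tau t) ^ 3
      - (2/3) * (2 * ((n₁ : ℝ) + 1) + 1) * K * tau t = 0 :=
  stmt_0_general n₁ K I hI lam mu tau htau hode1 hode2 hode3
end

section
/- Let n₁ ≥ 1, K = 0, and let (λ₁,…,λ_{n₁}, μ₁,…,μ_{n₁}) be a real-analytic solution of the system (ODE) on an open interval I with τ ≡ 0 on I. Then there exist real constants a₁,…,a_{n₁} such that for each i, either (a) there is a constant cᵢ ∈ ℝ with t + cᵢ ≠ 0 on I, μᵢ(t) = −1/(t + cᵢ) and λᵢ(t) = aᵢ/(t + cᵢ), or (b) μᵢ ≡ 0 and λᵢ ≡ aᵢ. Moreover, for every index k, the sum of aᵢ over all indices i for which μᵢ and μ_k coincide as functions on I equals 0. -/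
/-!
With `τ ≡ 0` and `K = 0` the system decouples into `μᵢ' = μᵢ²`, `λᵢ' = λᵢ μᵢ` and
`Σ λᵢ = 0`. Fix `t₀ ∈ I` and put `Dᵢ(t) = 1 - (t - t₀) μᵢ(t₀)`. Both `μᵢ Dᵢ - μᵢ(t₀)` and
`λᵢ Dᵢ - λᵢ(t₀)` solve linear ODEs and vanish at `t₀`, hence vanish on `I` by Grönwall, so
`μᵢ = μᵢ(t₀)/Dᵢ` and `λᵢ = λᵢ(t₀)/Dᵢ`: this is the dichotomy (a)/(b), and shows that `μᵢ = μₖ`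
on `I` iff `μᵢ(t₀) = μₖ(t₀)`. Differentiating `Σ λᵢ μᵢ^m` gives `(m+1) Σ λᵢ μᵢ^(m+1)`, so all
moments `Σ λᵢ(t₀) μᵢ(t₀)^m` vanish; by a Vandermonde argument so does the sum of `λᵢ(t₀)` over
each level set of `i ↦ μᵢ(t₀)`, and `aᵢ` is `λᵢ(t₀)` times a factor depending only on `μᵢ(t₀)`.
-/

open Set Finset
open scoped Classical

theorem Set.OrdConnected.eqOn_zero_of_hasDerivAt_mul {I : Set ℝ} (hI : I.OrdConnected)
    {f g : ℝ → ℝ} (hg : ContinuousOn g I) (hf : ∀ t ∈ I, HasDerivAt f (g t * f t) t)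
    {t₀ : ℝ} (ht₀ : t₀ ∈ I) (h0 : f t₀ = 0) : EqOn f 0 I := by
  intro t ht
  have hsub : uIcc t₀ t ⊆ I := hI.uIcc_subset ht₀ ht
  obtain ⟨M, hM⟩ := isCompact_uIcc.exists_bound_of_continuousOn (hg.mono hsub)
  have hv : ∀ s ∈ uIcc t₀ t, LipschitzOnWith M.toNNReal (fun x => g s * x) univ := by
    refine fun s hs => (LipschitzWith.of_dist_le_mul fun x y => ?_).lipschitzOnWith
    rw [Real.dist_eq, Real.dist_eq, ← mul_sub, abs_mul]
    exact mul_le_mul_of_nonneg_right ((hM s hs).trans (Real.le_coe_toNNReal M)) (abs_nonneg _)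
  have hfc : ContinuousOn f (uIcc t₀ t) := HasDerivAt.continuousOn fun s hs => hf s (hsub hs)
  have h0' (s : ℝ) : HasDerivAt (0 : ℝ → ℝ) (g s * 0) s := by simp
  rcases le_total t₀ t with h | h
  · have hIcc : Icc t₀ t ⊆ uIcc t₀ t := Icc_subset_uIcc
    exact ODE_solution_unique_of_mem_Icc_right (v := fun s x => g s * x) (s := fun _ => univ)
      (fun s hs => hv s (hIcc (Ico_subset_Icc_self hs))) (hfc.mono hIcc)
      (fun s hs => (hf s (hsub (hIcc (Ico_subset_Icc_self hs)))).hasDerivWithinAt)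
      (fun _ _ => trivial) continuousOn_const (fun s _ => (h0' s).hasDerivWithinAt)
      (fun _ _ => trivial) h0 ⟨h, le_rfl⟩
  · have hIcc : Icc t t₀ ⊆ uIcc t₀ t := Icc_subset_uIcc'
    exact ODE_solution_unique_of_mem_Icc_left (v := fun s x => g s * x) (s := fun _ => univ)
      (fun s hs => hv s (hIcc (Ioc_subset_Icc_self hs))) (hfc.mono hIcc)
      (fun s hs => (hf s (hsub (hIcc (Ioc_subset_Icc_self hs)))).hasDerivWithinAt)
      (fun _ _ => trivial) continuousOn_const (fun s _ => (h0' s).hasDerivWithinAt)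
      (fun _ _ => trivial) h0 ⟨le_rfl, h⟩

section Riccati

variable {I : Set ℝ} {μ : ℝ → ℝ} {t₀ t : ℝ}

theorem riccati_mul_denom_eq (hI : I.OrdConnected) (hμ : ∀ t ∈ I, HasDerivAt μ (μ t ^ 2) t)
    (ht₀ : t₀ ∈ I) (ht : t ∈ I) : μ t * (1 - (t - t₀) * μ t₀) = μ t₀ := by
  have hw : ∀ s ∈ I, HasDerivAt (fun s => μ s * (1 - (s - t₀) * μ t₀) - μ t₀)
      (μ s * (μ s * (1 - (s - t₀) * μ t₀) - μ t₀)) s := fun s hs => by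
    refine ((hμ s hs).mul ((((hasDerivAt_id' s).sub_const t₀).mul_const (μ t₀)).const_sub
      1)).sub_const (μ t₀) |>.congr_deriv ?_
    ring
  have := hI.eqOn_zero_of_hasDerivAt_mul (HasDerivAt.continuousOn hμ) hw ht₀ (by simp) ht
  simpa [sub_eq_zero] using this

theorem riccati_denom_ne_zero (hI : I.OrdConnected) (hμ : ∀ t ∈ I, HasDerivAt μ (μ t ^ 2) t)
    (ht₀ : t₀ ∈ I) (ht : t ∈ I) : 1 - (t - t₀) * μ t₀ ≠ 0 := by
  intro hD
  have h0 : μ t₀ = 0 := by rw [← riccati_mul_denom_eq hI hμ ht₀ ht, hD, mul_zero]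
  simp [h0] at hD

theorem riccati_eqOn_iff (hI : I.OrdConnected) {ν : ℝ → ℝ}
    (hμ : ∀ t ∈ I, HasDerivAt μ (μ t ^ 2) t) (hν : ∀ t ∈ I, HasDerivAt ν (ν t ^ 2) t)
    (ht₀ : t₀ ∈ I) : EqOn μ ν I ↔ μ t₀ = ν t₀ := by
  refine ⟨fun h => h ht₀, fun h t ht => ?_⟩
  have hD := riccati_denom_ne_zero hI hμ ht₀ ht
  have hμt := riccati_mul_denom_eq hI hμ ht₀ ht
  have hνt := riccati_mul_denom_eq hI hν ht₀ ht
  rw [← h] at hνt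
  exact mul_right_cancel₀ hD (hμt.trans hνt.symm)

theorem mul_riccati_denom_eq (hI : I.OrdConnected) {lam : ℝ → ℝ}
    (hμ : ∀ t ∈ I, HasDerivAt μ (μ t ^ 2) t) (hlam : ∀ t ∈ I, HasDerivAt lam (lam t * μ t) t)
    (ht₀ : t₀ ∈ I) (ht : t ∈ I) : lam t * (1 - (t - t₀) * μ t₀) = lam t₀ := by
  have hw : ∀ s ∈ I, HasDerivAt (fun s => lam s * (1 - (s - t₀) * μ t₀) - lam t₀)
      (0 * (lam s * (1 - (s - t₀) * μ t₀) - lam t₀)) s := fun s hs => by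
    refine ((hlam s hs).mul ((((hasDerivAt_id' s).sub_const t₀).mul_const (μ t₀)).const_sub
      1)).sub_const (lam t₀) |>.congr_deriv ?_
    linear_combination lam s * riccati_mul_denom_eq hI hμ ht₀ hs
  have := hI.eqOn_zero_of_hasDerivAt_mul continuousOn_const hw ht₀ (by simp) ht
  simpa [sub_eq_zero] using this

/-- `λ(t₀) * residueFactor (μ(t₀))` is the numerator `a` of `λ = a / (t + c)` when `μ(t₀) ≠ 0`,
and the constant value of `λ` when `μ ≡ 0`. -/
noncomputable def residueFactor (x : ℝ) : ℝ := if x = 0 then 1 else -x⁻¹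

theorem riccati_solution_cases (hI : I.OrdConnected) {lam : ℝ → ℝ}
    (hμ : ∀ t ∈ I, HasDerivAt μ (μ t ^ 2) t) (hlam : ∀ t ∈ I, HasDerivAt lam (lam t * μ t) t)
    (ht₀ : t₀ ∈ I) :
    (∃ c : ℝ, (∀ t ∈ I, t + c ≠ 0) ∧
      ∀ t ∈ I, μ t = -(1 / (t + c)) ∧ lam t = lam t₀ * residueFactor (μ t₀) / (t + c)) ∨
    ((∀ t ∈ I, μ t = 0) ∧ ∀ t ∈ I, lam t = lam t₀ * residueFactor (μ t₀)) := by
  have hD (t) (ht : t ∈ I) := riccati_denom_ne_zero hI hμ ht₀ ht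
  have hμt (t) (ht : t ∈ I) := eq_div_of_mul_eq (hD t ht) (riccati_mul_denom_eq hI hμ ht₀ ht)
  have hlamt (t) (ht : t ∈ I) :=
    eq_div_of_mul_eq (hD t ht) (mul_riccati_denom_eq hI hμ hlam ht₀ ht)
  by_cases h0 : μ t₀ = 0
  · right
    rw [residueFactor, if_pos h0, mul_one]
    exact ⟨fun t ht => by simpa [h0] using hμt t ht, fun t ht => by simpa [h0] using hlamt t ht⟩
  · left
    have hc (t : ℝ) : t + (-t₀ - (μ t₀)⁻¹) = -(1 - (t - t₀) * μ t₀) / μ t₀ := by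
      field_simp
      ring
    refine ⟨-t₀ - (μ t₀)⁻¹, fun t ht => ?_, fun t ht => ⟨?_, ?_⟩⟩
    · rw [hc]
      exact div_ne_zero (neg_ne_zero.2 (hD t ht)) h0
    · rw [hμt t ht, hc]
      field_simp [hD t ht]
    · rw [hlamt t ht, hc, residueFactor, if_neg h0]
      field_simp [hD t ht]

end Riccati

theorem sum_mul_pow_eq_zero_of_sum_eq_zero {ι : Type*} [Fintype ι] {I : Set ℝ} (hI : IsOpen I)
    {lam mu : ι → ℝ → ℝ} (hmu : ∀ i, ∀ t ∈ I, HasDerivAt (mu i) (mu i t ^ 2) t)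
    (hlam : ∀ i, ∀ t ∈ I, HasDerivAt (lam i) (lam i t * mu i t) t)
    (hsum : ∀ t ∈ I, ∑ i, lam i t = 0) (m : ℕ) : ∀ t ∈ I, ∑ i, lam i t * mu i t ^ m = 0 := by
  induction m with
  | zero => simpa using hsum
  | succ m ih =>
    intro t ht
    have hderiv : HasDerivAt (fun s => ∑ i, lam i s * mu i s ^ m)
        ((m + 1) * ∑ i, lam i t * mu i t ^ (m + 1)) t := by
      rw [mul_sum]
      refine HasDerivAt.fun_sum fun i _ => ?_
      refine ((hlam i t ht).mul ((hmu i t ht).fun_pow m)).congr_deriv ?_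
      rcases m with _ | m
      · simp
      · push_cast [Nat.add_sub_cancel]
        ring
    have hzero : HasDerivAt (fun s => ∑ i, lam i s * mu i s ^ m) 0 t :=
      (hasDerivAt_const t 0).congr_of_eventuallyEq
        (Filter.eventuallyEq_of_mem (hI.mem_nhds ht) ih)
    exact (mul_eq_zero.1 (hderiv.unique hzero)).resolve_left (by positivity)

theorem Finset.sum_filter_eq_zero_of_sum_mul_pow_eq_zero {ι K : Type*} [Fintype ι] [Field K]
    [DecidableEq K] {x w : ι → K} (h : ∀ m : ℕ, ∑ i, w i * x i ^ m = 0) (v : K) :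
    ∑ i ∈ univ.filter (fun i => x i = v), w i = 0 := by
  have hpoly (p : Polynomial K) : ∑ i, w i * p.eval (x i) = 0 := by
    simp_rw [Polynomial.eval_eq_sum_range, mul_sum]
    rw [sum_comm]
    refine sum_eq_zero fun m _ => ?_
    simp_rw [mul_left_comm (w _), ← mul_sum, h, mul_zero]
  set P : Polynomial K := ∏ u ∈ (univ.image x).erase v, (Polynomial.X - Polynomial.C u)
  have hPv : P.eval v ≠ 0 := by
    rw [Polynomial.eval_prod]
    exact prod_ne_zero_iff.2 fun u hu => by
      simpa [sub_eq_zero] using (ne_of_mem_erase hu).symm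
  have hPx (i : ι) : w i * P.eval (x i) = if x i = v then w i * P.eval v else 0 := by
    split_ifs with hi
    · rw [hi]
    · rw [Polynomial.eval_prod, prod_eq_zero (mem_erase.2 ⟨hi, by simp⟩)
        (by simp), mul_zero]
  have := hpoly P
  rw [sum_congr rfl fun i _ => hPx i, ← sum_filter, ← sum_mul] at this
  exact (mul_eq_zero.1 this).resolve_right hPv

theorem stmt_1_general (n₁ : ℕ) (K : ℝ) (hK : K = 0)
    (I : Set ℝ) (hI : IsOpen I) (hIconn : I.OrdConnected)
    (lam mu : Fin n₁ → ℝ → ℝ)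
    (tau : ℝ → ℝ) (htau : ∀ t, tau t = (2/3) * ∑ i, lam i t)
    (hode1 : ∀ i, ∀ t ∈ I, HasDerivAt (lam i) ((tau t / 2 + lam i t) * mu i t) t)
    (hode2 : ∀ i, ∀ t ∈ I,
      HasDerivAt (mu i) ((mu i t) ^ 2 - tau t / 2 * lam i t + K) t)
    (htau0 : ∀ t ∈ I, tau t = 0) :
    ∃ a : Fin n₁ → ℝ,
      (∀ i,
        (∃ c : ℝ, (∀ t ∈ I, t + c ≠ 0) ∧
          (∀ t ∈ I, mu i t = -(1 / (t + c)) ∧ lam i t = a i / (t + c))) ∨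
        ((∀ t ∈ I, mu i t = 0) ∧ (∀ t ∈ I, lam i t = a i))) ∧
      (∀ k : Fin n₁,
        (∑ i ∈ Finset.univ.filter (fun i => Set.EqOn (mu i) (mu k) I), a i) = 0) := by
  have hmu (i) : ∀ t ∈ I, HasDerivAt (mu i) (mu i t ^ 2) t := fun t ht => by
    simpa [htau0 t ht, hK] using hode2 i t ht
  have hlam (i) : ∀ t ∈ I, HasDerivAt (lam i) (lam i t * mu i t) t := fun t ht => by
    simpa [htau0 t ht] using hode1 i t ht
  have hsum : ∀ t ∈ I, ∑ i, lam i t = 0 := fun t ht => by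
    linarith [htau t, htau0 t ht]
  rcases I.eq_empty_or_nonempty with rfl | ⟨t₀, ht₀⟩
  · exact ⟨0, fun _ => Or.inr ⟨by simp, by simp⟩, by simp⟩
  refine ⟨fun i => lam i t₀ * residueFactor (mu i t₀),
    fun i => riccati_solution_cases hIconn (hmu i) (hlam i) ht₀, fun k => ?_⟩
  rw [filter_congr fun i _ => riccati_eqOn_iff hIconn (hmu i) (hmu k) ht₀]
  have hgroup : ∀ i ∈ univ.filter (fun i => mu i t₀ = mu k t₀),
      lam i t₀ * residueFactor (mu i t₀) = lam i t₀ * residueFactor (mu k t₀) :=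
    fun i hi => by rw [(mem_filter.1 hi).2]
  rw [sum_congr rfl hgroup, ← sum_mul, sum_filter_eq_zero_of_sum_mul_pow_eq_zero
    (fun m => sum_mul_pow_eq_zero_of_sum_eq_zero hI hmu hlam hsum m t₀ ht₀), zero_mul]

/-- Classification of solutions of the ODE system with `K = 0` and `τ ≡ 0`. -/
theorem stmt_1 (n₁ : ℕ) (hn : 1 ≤ n₁) (K : ℝ) (hK : K = 0)
    (I : Set ℝ) (hI : IsOpen I) (hIconn : I.OrdConnected)
    (lam mu : Fin n₁ → ℝ → ℝ)
    (hlam : ∀ i, AnalyticOnNhd ℝ (lam i) I)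
    (hmu : ∀ i, AnalyticOnNhd ℝ (mu i) I)
    (tau : ℝ → ℝ) (htau : ∀ t, tau t = (2/3) * ∑ i, lam i t)
    (hode1 : ∀ i, ∀ t ∈ I, HasDerivAt (lam i) ((tau t / 2 + lam i t) * mu i t) t)
    (hode2 : ∀ i, ∀ t ∈ I,
      HasDerivAt (mu i) ((mu i t) ^ 2 - tau t / 2 * lam i t + K) t)
    (hode3 : ∀ t ∈ I,
      -(deriv (deriv tau) t) + deriv tau t * (∑ i, mu i t)
        + tau t * ((tau t) ^ 2 / 4 - ((n₁ : ℝ) + 1) * K + ∑ i, (lam i t) ^ 2) = 0)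
    (htau0 : ∀ t ∈ I, tau t = 0) :
    ∃ a : Fin n₁ → ℝ,
      (∀ i,
        (∃ c : ℝ, (∀ t ∈ I, t + c ≠ 0) ∧
          (∀ t ∈ I, mu i t = -(1 / (t + c)) ∧ lam i t = a i / (t + c))) ∨
        ((∀ t ∈ I, mu i t = 0) ∧ (∀ t ∈ I, lam i t = a i))) ∧
      (∀ k : Fin n₁,
        (∑ i ∈ Finset.univ.filter (fun i => Set.EqOn (mu i) (mu k) I), a i) = 0) :=
  stmt_1_general n₁ K hK I hI hIconn lam mu tau htau hode1 hode2 htau0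
end

section
/- Let n₁ ≥ 1, K = −1, and let (λ₁,…,λ_{n₁}, μ₁,…,μ_{n₁}) be a real-analytic solution of the system (ODE) on an open interval I with τ ≡ 0 on I. Then there exist real constants a₁,…,a_{n₁} such that for each i one of the following holds: (a) there is cᵢ ∈ ℝ with μᵢ(t) = −tanh(t + cᵢ) and λᵢ(t) = aᵢ/cosh(t + cᵢ); (b) μᵢ ≡ 1 and λᵢ(t) = aᵢ·e^t; (c) μᵢ ≡ −1 and λᵢ(t) = aᵢ·e^{−t}; (d) there is cᵢ ∈ ℝ with t + cᵢ ≠ 0 on I, μᵢ(t) = −coth(t + cᵢ) and λᵢ(t) = aᵢ/sinh(t + cᵢ). Moreover, for every index k, the sum of aᵢ over all indices i for which μᵢ and μ_k coincide as functions on I equals 0. -/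
open scoped Classical

open Real Set Polynomial

/-!
With `τ ≡ 0` the system decouples into `μᵢ' = μᵢ² - 1`, `λᵢ' = λᵢ μᵢ` and the constraint
`∑ λᵢ = 0`. Linearising the Riccati equation, `ψ(t) = cosh (t - t₀) - μᵢ(t₀) sinh (t - t₀)`
satisfies `μᵢ = -ψ'/ψ` and `λᵢ = λᵢ(t₀)/ψ`, and `ψ = exp (-∫ μᵢ) > 0` on `I`. Writing `ψ` as a
multiple of `e^{t₀-t}`, `e^{t-t₀}`, `cosh (t + c)` or `sinh (t + c)` according as `μᵢ(t₀)` is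
`1`, `-1`, in `(-1, 1)` or outside `[-1, 1]` gives the four shapes, with `aᵢ = g(μᵢ(t₀)) λᵢ(t₀)`
for a scale `g` depending on `μᵢ(t₀)` only.

Differentiating `∑ λᵢ μᵢⁿ⁺¹` gives `(n+2) ∑ λᵢ μᵢⁿ⁺² - (n+1) ∑ λᵢ μᵢⁿ`, so all power sums
`∑ λᵢ μᵢⁿ` vanish. Pairing them at `t₀` with a polynomial that vanishes at every value `μⱼ(t₀)`
except one shows that `λᵢ(t₀)` sums to zero over each class `{i | μᵢ(t₀) = v}`; as `μᵢ` is
determined by `μᵢ(t₀)`, these are the classes of equal `μᵢ`, and `g` is constant on each.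
-/

theorem sum_filter_eq_zero_of_forall_sum_mul_pow_eq_zero {ι K : Type*} [Fintype ι] [Field K]
    {c x : ι → K} (h : ∀ n : ℕ, ∑ i, c i * x i ^ n = 0) (k : ι) :
    ∑ i ∈ Finset.univ.filter (fun i => x i = x k), c i = 0 := by
  have heval : ∀ p : K[X], ∑ i, c i * p.eval (x i) = 0 := by
    intro p
    induction p using Polynomial.induction_on' with
    | add p q hp hq => simp only [eval_add, mul_add, Finset.sum_add_distrib, hp, hq, add_zero]
    | monomial n a =>
      simp only [eval_monomial, mul_left_comm _ a, ← Finset.mul_sum, h n, mul_zero]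
  set p : K[X] := ∏ u ∈ (Finset.univ.image x).erase (x k), (X - C u)
  have hpk : p.eval (x k) ≠ 0 := by
    simp only [p, eval_prod, eval_sub, eval_X, eval_C]
    exact Finset.prod_ne_zero_iff.mpr fun u hu => sub_ne_zero.mpr (Finset.ne_of_mem_erase hu).symm
  have hp : ∀ i, x i ≠ x k → p.eval (x i) = 0 := fun i hi => by
    simp only [p, eval_prod, eval_sub, eval_X, eval_C]
    exact Finset.prod_eq_zero
      (Finset.mem_erase.mpr ⟨hi, Finset.mem_image_of_mem x (Finset.mem_univ i)⟩) (sub_self _)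
  have hsplit : (∑ i ∈ Finset.univ.filter (fun i => x i = x k), c i) * p.eval (x k) = 0 := by
    rw [Finset.sum_mul, ← heval p, ← Finset.sum_filter_add_sum_filter_not Finset.univ
        (fun i => x i = x k) (fun i => c i * p.eval (x i)),
      Finset.sum_eq_zero (s := Finset.univ.filter (fun i => ¬x i = x k))
        (fun i hi => by rw [hp i (Finset.mem_filter.mp hi).2, mul_zero]), add_zero]
    exact Finset.sum_congr rfl fun i hi => by rw [(Finset.mem_filter.mp hi).2]
  exact (mul_eq_zero.mp hsplit).resolve_right hpk

theorem HasDerivAt.eq_zero_of_eqOn_zero {f : ℝ → ℝ} {f' t : ℝ} {I : Set ℝ}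
    (hf : HasDerivAt f f' t) (hI : IsOpen I) (ht : t ∈ I) (h0 : EqOn f 0 I) : f' = 0 :=
  hf.unique ((hasDerivAt_const t 0).congr_of_eventuallyEq
    (Filter.eventually_of_mem (hI.mem_nhds ht) h0))

theorem hasDerivAt_mul_pow_of_riccati {lam mu : ℝ → ℝ} {t : ℝ}
    (hlam : HasDerivAt lam (lam t * mu t) t) (hmu : HasDerivAt mu (mu t ^ 2 - 1) t) (n : ℕ) :
    HasDerivAt (fun u => lam u * mu u ^ (n + 1))
      ((n + 2) * (lam t * mu t ^ (n + 2)) - (n + 1) * (lam t * mu t ^ n)) t :=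
  (hlam.mul (hmu.pow (n + 1))).congr_deriv (by push_cast [Pi.pow_apply]; ring)

theorem sum_mul_pow_eq_zero_of_riccati {ι : Type*} [Fintype ι] {I : Set ℝ} (hI : IsOpen I)
    {lam mu : ι → ℝ → ℝ} (hlam : ∀ i, ∀ t ∈ I, HasDerivAt (lam i) (lam i t * mu i t) t)
    (hmu : ∀ i, ∀ t ∈ I, HasDerivAt (mu i) (mu i t ^ 2 - 1) t)
    (hsum : ∀ t ∈ I, ∑ i, lam i t = 0) (n : ℕ) : ∀ t ∈ I, ∑ i, lam i t * mu i t ^ n = 0 := by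
  induction n using Nat.twoStepInduction with
  | zero => simpa using hsum
  | one =>
    intro t ht
    simpa using (HasDerivAt.fun_sum fun i _ => hlam i t ht).eq_zero_of_eqOn_zero hI ht hsum
  | more n hn hn1 =>
    intro t ht
    have hderiv := (HasDerivAt.fun_sum fun i _ =>
      hasDerivAt_mul_pow_of_riccati (hlam i t ht) (hmu i t ht) n).eq_zero_of_eqOn_zero hI ht
        fun s hs => by simpa using hn1 s hs
    rw [Finset.sum_sub_distrib, ← Finset.mul_sum, ← Finset.mul_sum, hn t ht, mul_zero,
      sub_zero] at hderiv
    exact (mul_eq_zero.mp hderiv).resolve_left (by positivity)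

theorem exists_forall_hasDerivAt_of_continuousOn {I : Set ℝ} (hI : IsOpen I)
    (hIc : I.OrdConnected) {f : ℝ → ℝ} (hf : ContinuousOn f I) {a : ℝ} (ha : a ∈ I) :
    ∃ F : ℝ → ℝ, ∀ t ∈ I, HasDerivAt F (f t) t := by
  refine ⟨fun u => ∫ x in a..u, f x, fun t ht => ?_⟩
  exact intervalIntegral.integral_hasDerivAt_right
    ((hf.mono (hIc.uIcc_subset ha ht)).intervalIntegrable)
    (ContinuousAt.stronglyMeasurableAtFilter hI
      (fun x hx => hf.continuousAt (hI.mem_nhds hx)) t ht)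
    (hf.continuousAt (hI.mem_nhds ht))

theorem eq_mul_exp_sub_of_hasDerivAt_mul {I : Set ℝ} (hI : IsOpen I) (hIc : I.OrdConnected)
    {a F f : ℝ → ℝ} (hF : ∀ t ∈ I, HasDerivAt F (a t) t)
    (hf : ∀ t ∈ I, HasDerivAt f (a t * f t) t) {s t : ℝ} (hs : s ∈ I) (ht : t ∈ I) :
    f t = f s * exp (F t - F s) := by
  have hderiv : ∀ u ∈ I, HasDerivAt (fun u => f u * exp (-F u)) 0 u := fun u hu =>
    ((hf u hu).mul ((hF u hu).neg.exp)).congr_deriv (by ring)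
  have hconst : f t * exp (-F t) = f s * exp (-F s) :=
    hI.is_const_of_deriv_eq_zero hIc.isPreconnected
      (fun u hu => (hderiv u hu).differentiableAt.differentiableWithinAt)
      (fun u hu => (hderiv u hu).deriv) ht hs
  calc f t = f t * exp (-F t) * exp (F t) := by
        rw [mul_assoc, ← exp_add, neg_add_cancel, exp_zero, mul_one]
    _ = f s * exp (F t - F s) := by rw [hconst, mul_assoc, ← exp_add, neg_add_eq_sub]

/-- With `ψ(t) = cosh (t - t₀) - μ(t₀) sinh (t - t₀)` (so `ψ(t₀) = 1`, `ψ'(t₀) = -μ(t₀)`),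
this says `ψ > 0`, `μ = -ψ'/ψ` and `λ = λ(t₀)/ψ` on `I`. -/
structure RiccatiClosedForm (I : Set ℝ) (t₀ : ℝ) (mu lam : ℝ → ℝ) : Prop where
  profile_pos : ∀ t ∈ I, 0 < cosh (t - t₀) - mu t₀ * sinh (t - t₀)
  mu_mul_profile : ∀ t ∈ I,
    mu t * (cosh (t - t₀) - mu t₀ * sinh (t - t₀)) = mu t₀ * cosh (t - t₀) - sinh (t - t₀)
  lam_mul_profile : ∀ t ∈ I, lam t * (cosh (t - t₀) - mu t₀ * sinh (t - t₀)) = lam t₀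

theorem riccatiClosedForm_of_hasDerivAt {I : Set ℝ} (hI : IsOpen I) (hIc : I.OrdConnected)
    {t₀ : ℝ} (ht₀ : t₀ ∈ I) {mu lam : ℝ → ℝ}
    (hmu : ∀ t ∈ I, HasDerivAt mu (mu t ^ 2 - 1) t)
    (hlam : ∀ t ∈ I, HasDerivAt lam (lam t * mu t) t) : RiccatiClosedForm I t₀ mu lam := by
  set v := mu t₀
  set ψ : ℝ → ℝ := fun t => cosh (t - t₀) - v * sinh (t - t₀)
  set χ : ℝ → ℝ := fun t => sinh (t - t₀) - v * cosh (t - t₀)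
  have hψ : ∀ t, HasDerivAt ψ (χ t) t := fun t =>
    (((hasDerivAt_id t).sub_const t₀).cosh.sub
      (((hasDerivAt_id t).sub_const t₀).sinh.const_mul v)).congr_deriv (by simp [χ])
  have hχ : ∀ t, HasDerivAt χ (ψ t) t := fun t =>
    (((hasDerivAt_id t).sub_const t₀).sinh.sub
      (((hasDerivAt_id t).sub_const t₀).cosh.const_mul v)).congr_deriv (by simp [ψ])
  obtain ⟨F, hF⟩ := exists_forall_hasDerivAt_of_continuousOn hI hIc
    (fun t ht => (hmu t ht).continuousAt.continuousWithinAt) ht₀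
  -- `w := μψ + ψ'` solves `w' = μ w` and vanishes at `t₀`.
  have hw : ∀ t ∈ I, mu t * ψ t + χ t = 0 := fun t ht => by
    rw [eq_mul_exp_sub_of_hasDerivAt_mul (f := fun t => mu t * ψ t + χ t) hI hIc hF
      (fun s hs => (((hmu s hs).mul (hψ s)).add (hχ s)).congr_deriv (by ring)) ht₀ ht]
    simp [ψ, χ, v]
  have hψ_eq : ∀ t ∈ I, ψ t = exp (-F t - -F t₀) := fun t ht => by
    rw [eq_mul_exp_sub_of_hasDerivAt_mul hI hIc (fun s hs => (hF s hs).neg)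
      (fun s hs => (hψ s).congr_deriv (by linear_combination hw s hs)) ht₀ ht]
    simp [ψ]
  have hlam_eq : ∀ t ∈ I, lam t = lam t₀ * exp (F t - F t₀) := fun t ht =>
    eq_mul_exp_sub_of_hasDerivAt_mul hI hIc hF
      (fun s hs => (hlam s hs).congr_deriv (mul_comm _ _)) ht₀ ht
  refine ⟨fun t ht => ?_, fun t ht => by linear_combination hw t ht, fun t ht => ?_⟩
  · rw [show cosh (t - t₀) - v * sinh (t - t₀) = ψ t from rfl, hψ_eq t ht]
    positivity
  · have hexp : exp (F t - F t₀) * exp (-F t - -F t₀) = 1 := by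
      rw [← exp_add, ← exp_zero]; congr 1; ring
    rw [show cosh (t - t₀) - v * sinh (t - t₀) = ψ t from rfl, hψ_eq t ht, hlam_eq t ht,
      mul_assoc, hexp, mul_one]

def HyperbolicForm (I : Set ℝ) (mu lam : ℝ → ℝ) (a : ℝ) : Prop :=
  (∃ c : ℝ, ∀ t ∈ I, mu t = -Real.tanh (t + c) ∧ lam t = a / Real.cosh (t + c)) ∨
  ((∀ t ∈ I, mu t = 1) ∧ (∀ t ∈ I, lam t = a * Real.exp t)) ∨
  ((∀ t ∈ I, mu t = -1) ∧ (∀ t ∈ I, lam t = a * Real.exp (-t))) ∨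
  (∃ c : ℝ, (∀ t ∈ I, t + c ≠ 0) ∧
    (∀ t ∈ I, mu t = -(Real.cosh (t + c) / Real.sinh (t + c)) ∧ lam t = a / Real.sinh (t + c)))

namespace RiccatiClosedForm

variable {I : Set ℝ} {t₀ : ℝ} {mu lam : ℝ → ℝ}

theorem mu_eq (h : RiccatiClosedForm I t₀ mu lam) {t : ℝ} (ht : t ∈ I) :
    mu t = (mu t₀ * cosh (t - t₀) - sinh (t - t₀)) / (cosh (t - t₀) - mu t₀ * sinh (t - t₀)) :=
  eq_div_of_mul_eq (h.profile_pos t ht).ne' (h.mu_mul_profile t ht)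

theorem hyperbolicForm_of_eq_one (h : RiccatiClosedForm I t₀ mu lam) (hv : mu t₀ = 1) :
    HyperbolicForm I mu lam (exp (-t₀) * lam t₀) := by
  have hprofile : ∀ t, cosh (t - t₀) - mu t₀ * sinh (t - t₀) = exp (-(t - t₀)) := fun t => by
    rw [hv, one_mul, cosh_sub_sinh]
  refine Or.inr (Or.inl ⟨fun t ht => ?_, fun t ht => ?_⟩)
  · have hm := h.mu_mul_profile t ht
    rw [hprofile, hv, one_mul, cosh_sub_sinh] at hm
    exact mul_right_cancel₀ (exp_pos _).ne' (hm.trans (one_mul _).symm)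
  · have hexp : exp (-t₀) * exp (-(t - t₀)) * exp t = 1 := by
      rw [← exp_add, ← exp_add, ← exp_zero]; congr 1; ring
    rw [← h.lam_mul_profile t ht, hprofile]
    linear_combination (-lam t) * hexp

theorem hyperbolicForm_of_eq_neg_one (h : RiccatiClosedForm I t₀ mu lam) (hv : mu t₀ = -1) :
    HyperbolicForm I mu lam (exp t₀ * lam t₀) := by
  have hprofile : ∀ t, cosh (t - t₀) - mu t₀ * sinh (t - t₀) = exp (t - t₀) := fun t => by
    rw [hv, neg_one_mul, sub_neg_eq_add, cosh_add_sinh]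
  refine Or.inr (Or.inr (Or.inl ⟨fun t ht => ?_, fun t ht => ?_⟩))
  · have hm := h.mu_mul_profile t ht
    rw [hprofile, hv, neg_one_mul, neg_sub_left, add_comm, cosh_add_sinh] at hm
    exact mul_right_cancel₀ (exp_pos _).ne' (hm.trans (neg_one_mul _).symm)
  · have hexp : exp t₀ * exp (t - t₀) * exp (-t) = 1 := by
      rw [← exp_add, ← exp_add, ← exp_zero]; congr 1; ring
    rw [← h.lam_mul_profile t ht, hprofile]
    linear_combination (-lam t) * hexp

theorem hyperbolicForm_of_sinh_eq {d : ℝ} (h : RiccatiClosedForm I t₀ mu lam)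
    (hd : sinh d = -mu t₀ * cosh d) : HyperbolicForm I mu lam (cosh d * lam t₀) := by
  refine Or.inl ⟨d - t₀, fun t ht => ?_⟩
  have hcosh : cosh (t + (d - t₀)) = cosh d * (cosh (t - t₀) - mu t₀ * sinh (t - t₀)) := by
    rw [show t + (d - t₀) = t - t₀ + d by ring, cosh_add, hd]; ring
  have hsinh : sinh (t + (d - t₀)) = cosh d * (sinh (t - t₀) - mu t₀ * cosh (t - t₀)) := by
    rw [show t + (d - t₀) = t - t₀ + d by ring, sinh_add, hd]; ring
  have hpos := h.profile_pos t ht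
  constructor
  · rw [h.mu_eq ht, tanh_eq_sinh_div_cosh, hsinh, hcosh, mul_div_mul_left _ _ (cosh_pos d).ne',
      ← neg_div, neg_sub]
  · rw [hcosh, eq_div_iff (mul_pos (cosh_pos d) hpos).ne']
    linear_combination cosh d * h.lam_mul_profile t ht

theorem hyperbolicForm_of_cosh_eq {d : ℝ} (h : RiccatiClosedForm I t₀ mu lam)
    (hd : cosh d = -mu t₀ * sinh d) : HyperbolicForm I mu lam (sinh d * lam t₀) := by
  have hd0 : sinh d ≠ 0 := fun h0 => (cosh_pos d).ne' (by rw [hd, h0, mul_zero])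
  have hsinh : ∀ t, sinh (t + (d - t₀)) = sinh d * (cosh (t - t₀) - mu t₀ * sinh (t - t₀)) :=
    fun t => by rw [show t + (d - t₀) = t - t₀ + d by ring, sinh_add, hd]; ring
  have hsinh0 : ∀ t ∈ I, sinh (t + (d - t₀)) ≠ 0 := fun t ht => by
    rw [hsinh]; exact mul_ne_zero hd0 (h.profile_pos t ht).ne'
  refine Or.inr (Or.inr (Or.inr ⟨d - t₀, fun t ht h0 => hsinh0 t ht (by rw [h0, sinh_zero]),
    fun t ht => ⟨?_, ?_⟩⟩))
  · have hcosh : cosh (t + (d - t₀)) = sinh d * (sinh (t - t₀) - mu t₀ * cosh (t - t₀)) := by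
      rw [show t + (d - t₀) = t - t₀ + d by ring, cosh_add, hd]; ring
    rw [h.mu_eq ht, hcosh, hsinh, mul_div_mul_left _ _ hd0, ← neg_div, neg_sub]
  · rw [eq_div_iff (hsinh0 t ht), hsinh]
    linear_combination sinh d * h.lam_mul_profile t ht

end RiccatiClosedForm

theorem exists_sinh_eq_neg_mul_cosh {v : ℝ} (hv : |v| < 1) : ∃ d, sinh d = -v * cosh d := by
  refine ⟨artanh (-v), ?_⟩
  have htanh := tanh_artanh (x := -v) ⟨by linarith [le_abs_self v], by linarith [neg_le_abs v]⟩
  rw [tanh_eq_sinh_div_cosh, div_eq_iff (cosh_pos _).ne'] at htanh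
  exact htanh

theorem exists_hyperbolicForm_scale (t₀ v : ℝ) : ∃ g : ℝ, ∀ {I : Set ℝ} {mu lam : ℝ → ℝ},
    RiccatiClosedForm I t₀ mu lam → mu t₀ = v → HyperbolicForm I mu lam (g * lam t₀) := by
  rcases lt_trichotomy |v| 1 with hv | hv | hv
  · obtain ⟨d, hd⟩ := exists_sinh_eq_neg_mul_cosh hv
    exact ⟨cosh d, fun h hμ => h.hyperbolicForm_of_sinh_eq (by rw [hμ, hd])⟩
  · rcases abs_eq zero_le_one |>.mp hv with rfl | rfl
    · exact ⟨exp (-t₀), fun h hμ => h.hyperbolicForm_of_eq_one hμ⟩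
    · exact ⟨exp t₀, fun h hμ => h.hyperbolicForm_of_eq_neg_one hμ⟩
  · have hv0 : v ≠ 0 := by rintro rfl; norm_num at hv
    obtain ⟨d, hd⟩ := exists_sinh_eq_neg_mul_cosh (v := v⁻¹)
      (by rw [abs_inv]; exact inv_lt_one_of_one_lt₀ hv)
    refine ⟨sinh d, fun h hμ => h.hyperbolicForm_of_cosh_eq ?_⟩
    rw [hμ, hd]
    field_simp

theorem stmt_2_general (n₁ : ℕ) (K : ℝ) (hK : K = -1)
    (I : Set ℝ) (hI : IsOpen I) (hIconn : I.OrdConnected)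
    (lam mu : Fin n₁ → ℝ → ℝ)
    (tau : ℝ → ℝ) (htau : ∀ t, tau t = (2/3) * ∑ i, lam i t)
    (hode1 : ∀ i, ∀ t ∈ I, HasDerivAt (lam i) ((tau t / 2 + lam i t) * mu i t) t)
    (hode2 : ∀ i, ∀ t ∈ I,
      HasDerivAt (mu i) ((mu i t) ^ 2 - tau t / 2 * lam i t + K) t)
    (htau0 : ∀ t ∈ I, tau t = 0) :
    ∃ a : Fin n₁ → ℝ,
      (∀ i,
        (∃ c : ℝ, ∀ t ∈ I,
            mu i t = -Real.tanh (t + c) ∧ lam i t = a i / Real.cosh (t + c)) ∨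
        ((∀ t ∈ I, mu i t = 1) ∧ (∀ t ∈ I, lam i t = a i * Real.exp t)) ∨
        ((∀ t ∈ I, mu i t = -1) ∧ (∀ t ∈ I, lam i t = a i * Real.exp (-t))) ∨
        (∃ c : ℝ, (∀ t ∈ I, t + c ≠ 0) ∧
          (∀ t ∈ I, mu i t = -(Real.cosh (t + c) / Real.sinh (t + c)) ∧
            lam i t = a i / Real.sinh (t + c)))) ∧
      (∀ k : Fin n₁,
        (∑ i ∈ Finset.univ.filter (fun i => Set.EqOn (mu i) (mu k) I), a i) = 0) := by
  subst hK
  rcases I.eq_empty_or_nonempty with rfl | ⟨t₀, ht₀⟩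
  · exact ⟨0, fun i => Or.inr (Or.inl ⟨fun _ => False.elim, fun _ => False.elim⟩),
      fun k => Finset.sum_eq_zero fun i _ => rfl⟩
  have hlam : ∀ i, ∀ t ∈ I, HasDerivAt (lam i) (lam i t * mu i t) t := fun i t ht => by
    simpa [htau0 t ht] using hode1 i t ht
  have hmu : ∀ i, ∀ t ∈ I, HasDerivAt (mu i) (mu i t ^ 2 - 1) t := fun i t ht => by
    simpa [htau0 t ht, sub_eq_add_neg] using hode2 i t ht
  have hsum : ∀ t ∈ I, ∑ i, lam i t = 0 := fun t ht => by
    simpa [htau t] using htau0 t ht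
  have hform i := riccatiClosedForm_of_hasDerivAt hI hIconn ht₀ (hmu i) (hlam i)
  choose g hg using exists_hyperbolicForm_scale t₀
  refine ⟨fun i => g (mu i t₀) * lam i t₀, fun i => hg (mu i t₀) (hform i) rfl, fun k => ?_⟩
  have hclass : ∀ i, EqOn (mu i) (mu k) I ↔ mu i t₀ = mu k t₀ := fun i =>
    ⟨fun h => h ht₀, fun h t ht => by rw [(hform i).mu_eq ht, (hform k).mu_eq ht, h]⟩
  rw [Finset.filter_congr fun i _ => hclass i, Finset.sum_congr rfl
      (g := fun i => g (mu k t₀) * lam i t₀)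
      fun i hi => by simp only [(Finset.mem_filter.mp hi).2],
    ← Finset.mul_sum,
    sum_filter_eq_zero_of_forall_sum_mul_pow_eq_zero
      (fun n => sum_mul_pow_eq_zero_of_riccati hI hlam hmu hsum n t₀ ht₀) k, mul_zero]

/-- Classification of solutions of the ODE system with `K = -1` and `τ ≡ 0`. -/
theorem stmt_2 (n₁ : ℕ) (hn : 1 ≤ n₁) (K : ℝ) (hK : K = -1)
    (I : Set ℝ) (hI : IsOpen I) (hIconn : I.OrdConnected)
    (lam mu : Fin n₁ → ℝ → ℝ)
    (hlam : ∀ i, AnalyticOnNhd ℝ (lam i) I)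
    (hmu : ∀ i, AnalyticOnNhd ℝ (mu i) I)
    (tau : ℝ → ℝ) (htau : ∀ t, tau t = (2/3) * ∑ i, lam i t)
    (hode1 : ∀ i, ∀ t ∈ I, HasDerivAt (lam i) ((tau t / 2 + lam i t) * mu i t) t)
    (hode2 : ∀ i, ∀ t ∈ I,
      HasDerivAt (mu i) ((mu i t) ^ 2 - tau t / 2 * lam i t + K) t)
    (hode3 : ∀ t ∈ I,
      -(deriv (deriv tau) t) + deriv tau t * (∑ i, mu i t)
        + tau t * ((tau t) ^ 2 / 4 - ((n₁ : ℝ) + 1) * K + ∑ i, (lam i t) ^ 2) = 0)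
    (htau0 : ∀ t ∈ I, tau t = 0) :
    ∃ a : Fin n₁ → ℝ,
      (∀ i,
        (∃ c : ℝ, ∀ t ∈ I,
            mu i t = -Real.tanh (t + c) ∧ lam i t = a i / Real.cosh (t + c)) ∨
        ((∀ t ∈ I, mu i t = 1) ∧ (∀ t ∈ I, lam i t = a i * Real.exp t)) ∨
        ((∀ t ∈ I, mu i t = -1) ∧ (∀ t ∈ I, lam i t = a i * Real.exp (-t))) ∨
        (∃ c : ℝ, (∀ t ∈ I, t + c ≠ 0) ∧
          (∀ t ∈ I, mu i t = -(Real.cosh (t + c) / Real.sinh (t + c)) ∧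
            lam i t = a i / Real.sinh (t + c)))) ∧
      (∀ k : Fin n₁,
        (∑ i ∈ Finset.univ.filter (fun i => Set.EqOn (mu i) (mu k) I), a i) = 0) :=
  stmt_2_general n₁ K hK I hI hIconn lam mu tau htau hode1 hode2 htau0
end

section
/- Let n₁ ≥ 1, K = 1, and let (λ₁,…,λ_{n₁}, μ₁,…,μ_{n₁}) be a real-analytic solution of the system (ODE) on an open interval I with τ ≡ 0 on I. Then there exist real constants a₁,…,a_{n₁} and c₁,…,c_{n₁} such that for each i, the function t + cᵢ avoids π/2 + πℤ on I, μᵢ(t) = tan(t + cᵢ) and λᵢ(t) = aᵢ/cos(t + cᵢ); moreover the constants can be chosen so that for every index k, the sum of aᵢ over all indices i with cᵢ = c_k equals 0. -/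
open scoped Classical

/-!
With `τ ≡ 0` the system decouples: `μᵢ' = μᵢ² + 1` makes `arctan μᵢ - t` a constant `cᵢ`, and then
`λᵢ' = λᵢ tan (t + cᵢ)` makes `λᵢ cos (t + cᵢ)` a constant `aᵢ`. The relation `τ = 0` becomes
`∑ aᵢ / cos (t + cᵢ) = 0` on `I`. After grouping equal shifts, clearing denominators gives a
trigonometric polynomial vanishing on `I`, hence on `ℝ` by analytic continuation. At the pole
`π / 2 - d` of one group only that group's term survives, with the factor `∏ₑ sin (d - e)`, which
is nonzero because distinct shifts (all in an interval of length `π`) are incongruent modulo `π`.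
-/

open Real Filter Topology

theorem IsOpen.eq_of_hasDerivAt_zero {s : Set ℝ} {f : ℝ → ℝ} (hs : IsOpen s)
    (hs' : IsPreconnected s) (hf : ∀ x ∈ s, HasDerivAt f 0 x) {x y : ℝ} (hx : x ∈ s)
    (hy : y ∈ s) : f x = f y :=
  hs.is_const_of_deriv_eq_zero hs' (fun z hz => (hf z hz).differentiableAt.differentiableWithinAt)
    (fun z hz => (hf z hz).deriv) hx hy

section ODE

variable {I : Set ℝ} (hI : IsOpen I) (hI' : IsPreconnected I) {t₀ : ℝ} (ht₀ : t₀ ∈ I)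
include hI hI' ht₀

theorem arctan_sub_eq_of_hasDerivAt_sq_add_one {μ : ℝ → ℝ}
    (hμ : ∀ t ∈ I, HasDerivAt μ (μ t ^ 2 + 1) t) :
    ∀ t ∈ I, arctan (μ t) - t = arctan (μ t₀) - t₀ := by
  refine fun t ht =>
    hI.eq_of_hasDerivAt_zero (f := fun u => arctan (μ u) - u) hI' (fun s hs => ?_) ht ht₀
  refine (((hasDerivAt_arctan (μ s)).comp s (hμ s hs)).sub (hasDerivAt_id s)).congr_deriv ?_
  have hpos : (0 : ℝ) < 1 + μ s ^ 2 := by positivity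
  field_simp
  ring

theorem mul_cos_eq_of_hasDerivAt_mul_tan {l : ℝ → ℝ} {c : ℝ}
    (hcos : ∀ t ∈ I, cos (t + c) ≠ 0) (hl : ∀ t ∈ I, HasDerivAt l (l t * tan (t + c)) t) :
    ∀ t ∈ I, l t * cos (t + c) = l t₀ * cos (t₀ + c) := by
  refine fun t ht =>
    hI.eq_of_hasDerivAt_zero (f := fun u => l u * cos (u + c)) hI' (fun s hs => ?_) ht ht₀
  refine ((hl s hs).mul ((hasDerivAt_cos (s + c)).comp_add_const s c)).congr_deriv ?_
  rw [tan_eq_sin_div_cos]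
  field_simp [hcos s hs]
  ring

end ODE

theorem eq_zero_of_sum_div_cos_eq_zero {D : Finset ℝ}
    (hD : ∀ d ∈ D, ∀ e ∈ D, d ≠ e → sin (d - e) ≠ 0) {b : ℝ → ℝ} {U : Set ℝ} {t₀ : ℝ}
    (hU : U ∈ 𝓝 t₀) (hcos : ∀ t ∈ U, ∀ d ∈ D, cos (t + d) ≠ 0)
    (hsum : ∀ t ∈ U, ∑ d ∈ D, b d / cos (t + d) = 0) :
    ∀ d ∈ D, b d = 0 := by
  set H : ℝ → ℝ := fun t => ∑ d ∈ D, b d * ∏ e ∈ D.erase d, cos (t + e)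
  have hH_U : ∀ t ∈ U, H t = 0 := by
    intro t ht
    have : H t = (∑ d ∈ D, b d / cos (t + d)) * ∏ e ∈ D, cos (t + e) := by
      rw [Finset.sum_mul]
      refine Finset.sum_congr rfl fun d hd => ?_
      rw [← Finset.mul_prod_erase D _ hd]
      field_simp [hcos t ht d hd]
    rw [this, hsum t ht, zero_mul]
  have hH : ∀ t, H t = 0 := fun t =>
    AnalyticOnNhd.eqOn_zero_of_preconnected_of_eventuallyEq_zero (fun x _ => by fun_prop)
      isPreconnected_univ (Set.mem_univ t₀) (eventually_of_mem hU hH_U) (Set.mem_univ t)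
  intro d hd
  -- Every other term of `H` carries the factor `cos (π / 2) = 0`.
  have hpole : H (π / 2 - d) = b d * ∏ e ∈ D.erase d, sin (d - e) := by
    change ∑ d' ∈ D, b d' * ∏ e ∈ D.erase d', cos (π / 2 - d + e) = _
    rw [Finset.sum_eq_single_of_mem d hd]
    · congr 1
      refine Finset.prod_congr rfl fun e _ => ?_
      rw [← cos_pi_div_two_sub]
      ring_nf
    · intro d' _ hd'
      rw [Finset.prod_eq_zero (Finset.mem_erase.mpr ⟨Ne.symm hd', hd⟩), mul_zero]
      simp
  have hprod : ∏ e ∈ D.erase d, sin (d - e) ≠ 0 :=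
    Finset.prod_ne_zero_iff.mpr fun e he =>
      hD d hd e (Finset.mem_of_mem_erase he) (Finset.ne_of_mem_erase he).symm
  simpa [hprod] using hpole.symm.trans (hH _)

theorem sum_filter_eq_zero_of_sum_div_cos_eq_zero {ι : Type*} [Fintype ι] {a c : ι → ℝ}
    (hc : ∀ i j, c i ≠ c j → sin (c i - c j) ≠ 0) {U : Set ℝ} {t₀ : ℝ} (hU : U ∈ 𝓝 t₀)
    (hcos : ∀ t ∈ U, ∀ i, cos (t + c i) ≠ 0) (hsum : ∀ t ∈ U, ∑ i, a i / cos (t + c i) = 0)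
    (k : ι) : ∑ i with c i = c k, a i = 0 := by
  refine eq_zero_of_sum_div_cos_eq_zero (b := fun d => ∑ i with c i = d, a i)
    (by simpa only [Finset.forall_mem_image] using fun i _ j _ => hc i j) hU
    (fun t ht => by simpa only [Finset.forall_mem_image] using fun i _ => hcos t ht i)
    (fun t ht => ?_) _ (Finset.mem_image_of_mem c (Finset.mem_univ k))
  calc ∑ d ∈ Finset.univ.image c, (∑ i with c i = d, a i) / cos (t + d)
      = ∑ d ∈ Finset.univ.image c, ∑ i with c i = d, a i / cos (t + c i) := by
        refine Finset.sum_congr rfl fun d _ => ?_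
        rw [Finset.sum_div]
        exact Finset.sum_congr rfl fun i hi => by rw [(Finset.mem_filter.1 hi).2]
    _ = 0 := by
        rw [Finset.sum_fiberwise_of_maps_to fun i _ => Finset.mem_image_of_mem c (Finset.mem_univ i)]
        exact hsum t ht

theorem sin_arctan_sub_arctan_ne_zero {x y : ℝ} (h : x ≠ y) : sin (arctan x - arctan y) ≠ 0 := by
  have hx := arctan_mem_Ioo x
  have hy := arctan_mem_Ioo y
  rw [Ne, sin_eq_zero_iff_of_lt_of_lt (by linarith [hx.1, hy.2]) (by linarith [hx.2, hy.1]),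
    sub_eq_zero]
  exact fun hxy => h (arctan_injective hxy)

theorem stmt_3_general (n₁ : ℕ) (K : ℝ) (hK : K = 1)
    (I : Set ℝ) (hI : IsOpen I) (hIconn : I.OrdConnected)
    (lam mu : Fin n₁ → ℝ → ℝ)
    (tau : ℝ → ℝ) (htau : ∀ t, tau t = (2/3) * ∑ i, lam i t)
    (hode1 : ∀ i, ∀ t ∈ I, HasDerivAt (lam i) ((tau t / 2 + lam i t) * mu i t) t)
    (hode2 : ∀ i, ∀ t ∈ I,
      HasDerivAt (mu i) ((mu i t) ^ 2 - tau t / 2 * lam i t + K) t)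
    (htau0 : ∀ t ∈ I, tau t = 0) :
    ∃ a c : Fin n₁ → ℝ,
      (∀ i,
        (∀ t ∈ I, ∀ m : ℤ, t + c i ≠ Real.pi / 2 + m * Real.pi) ∧
        (∀ t ∈ I,
          mu i t = Real.tan (t + c i) ∧ lam i t = a i / Real.cos (t + c i))) ∧
      (∀ k : Fin n₁,
        (∑ i ∈ Finset.univ.filter (fun i => c i = c k), a i) = 0) := by
  obtain rfl | ⟨t₀, ht₀⟩ := I.eq_empty_or_nonempty
  · exact ⟨0, 0, by simp, by simp⟩
  have hIpre := hIconn.isPreconnected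
  set c : Fin n₁ → ℝ := fun i => arctan (mu i t₀) - t₀
  have harctan : ∀ i, ∀ t ∈ I, arctan (mu i t) = t + c i := fun i t ht => by
    have := arctan_sub_eq_of_hasDerivAt_sq_add_one hI hIpre ht₀
      (fun s hs => by simpa [htau0 s hs, hK] using hode2 i s hs) t ht
    linarith
  have hmu_tan : ∀ i, ∀ t ∈ I, mu i t = tan (t + c i) := fun i t ht => by
    rw [← harctan i t ht, tan_arctan]
  have hcos : ∀ i, ∀ t ∈ I, cos (t + c i) ≠ 0 := fun i t ht =>
    (harctan i t ht ▸ cos_arctan_pos (mu i t)).ne'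
  set a : Fin n₁ → ℝ := fun i => lam i t₀ * cos (t₀ + c i)
  have hlam_sec : ∀ i, ∀ t ∈ I, lam i t = a i / cos (t + c i) := fun i t ht => by
    rw [eq_div_iff (hcos i t ht)]
    refine mul_cos_eq_of_hasDerivAt_mul_tan hI hIpre ht₀ (hcos i)
      (fun s hs => ?_) t ht
    simpa [htau0 s hs, hmu_tan i s hs] using hode1 i s hs
  have hsin : ∀ i j, c i ≠ c j → sin (c i - c j) ≠ 0 := fun i j hij => by
    simpa [c] using sin_arctan_sub_arctan_ne_zero fun h => hij (by simp [c, h])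
  have hsum : ∀ t ∈ I, ∑ i, a i / cos (t + c i) = 0 := fun t ht => by
    simp_rw [← hlam_sec _ t ht]
    linarith [htau t, htau0 t ht]
  refine ⟨a, c, fun i => ⟨fun t ht m h => ?_, fun t ht => ⟨hmu_tan i t ht, hlam_sec i t ht⟩⟩,
    sum_filter_eq_zero_of_sum_div_cos_eq_zero hsin (hI.mem_nhds ht₀) (fun t ht i => hcos i t ht)
      hsum⟩
  exact cos_ne_zero_iff.mp (hcos i t ht) m (by rw [h]; ring)

/-- Classification of solutions of the ODE system with `K = 1` and `τ ≡ 0`. -/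
theorem stmt_3 (n₁ : ℕ) (hn : 1 ≤ n₁) (K : ℝ) (hK : K = 1)
    (I : Set ℝ) (hI : IsOpen I) (hIconn : I.OrdConnected)
    (lam mu : Fin n₁ → ℝ → ℝ)
    (hlam : ∀ i, AnalyticOnNhd ℝ (lam i) I)
    (hmu : ∀ i, AnalyticOnNhd ℝ (mu i) I)
    (tau : ℝ → ℝ) (htau : ∀ t, tau t = (2/3) * ∑ i, lam i t)
    (hode1 : ∀ i, ∀ t ∈ I, HasDerivAt (lam i) ((tau t / 2 + lam i t) * mu i t) t)
    (hode2 : ∀ i, ∀ t ∈ I,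
      HasDerivAt (mu i) ((mu i t) ^ 2 - tau t / 2 * lam i t + K) t)
    (hode3 : ∀ t ∈ I,
      -(deriv (deriv tau) t) + deriv tau t * (∑ i, mu i t)
        + tau t * ((tau t) ^ 2 / 4 - ((n₁ : ℝ) + 1) * K + ∑ i, (lam i t) ^ 2) = 0)
    (htau0 : ∀ t ∈ I, tau t = 0) :
    ∃ a c : Fin n₁ → ℝ,
      (∀ i,
        (∀ t ∈ I, ∀ m : ℤ, t + c i ≠ Real.pi / 2 + m * Real.pi) ∧
        (∀ t ∈ I,
          mu i t = Real.tan (t + c i) ∧ lam i t = a i / Real.cos (t + c i))) ∧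
      (∀ k : Fin n₁,
        (∑ i ∈ Finset.univ.filter (fun i => c i = c k), a i) = 0) :=
  stmt_3_general n₁ K hK I hI hIconn lam mu tau htau hode1 hode2 htau0
end

section
/- Let n₁ ≥ 1 be an integer, K ∈ ℝ, and let λ₁,…,λ_{n₁}, μ₁,…,μ_{n₁} be real constants with τ := (2/3)(λ₁ + ⋯ + λ_{n₁}) ≠ 0 satisfying, for every i: (τ/2 + λᵢ)·μᵢ = 0 and μᵢ² − (τ/2)λᵢ + K = 0, together with τ²/4 − (n₁+1)K + Σ λᵢ² = 0. Then n₁ = 3 (so n := n₁ + 1 = 4), K > 0, μᵢ = 0 for all i, and either λᵢ = √K for all i with τ = 2√K, or λᵢ = −√K for all i with τ = −2√K. -/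
/-- Constant solutions of the ODE system with `τ ≠ 0` exist only for `n₁ = 3`
(`n = 4`) and `K > 0`, with `λᵢ = ±√K`, `μᵢ = 0`, `τ = ±2√K`. -/
theorem stmt_4 (n₁ : ℕ) (hn : 1 ≤ n₁) (K : ℝ)
    (lam mu : Fin n₁ → ℝ)
    (tau : ℝ) (htau : tau = (2/3) * ∑ i, lam i) (htau_ne : tau ≠ 0)
    (h1 : ∀ i, (tau / 2 + lam i) * mu i = 0)
    (h2 : ∀ i, (mu i) ^ 2 - tau / 2 * lam i + K = 0)
    (h3 : tau ^ 2 / 4 - ((n₁ : ℝ) + 1) * K + ∑ i, (lam i) ^ 2 = 0) :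
    n₁ = 3 ∧ 0 < K ∧ (∀ i, mu i = 0) ∧
      (((∀ i, lam i = Real.sqrt K) ∧ tau = 2 * Real.sqrt K) ∨
       ((∀ i, lam i = -Real.sqrt K) ∧ tau = -(2 * Real.sqrt K))) := by
  have hsum : ∑ i, lam i = 3 / 2 * tau := by
    rw [htau]; ring
  -- each λᵢ is either -τ/2 or 2K/τ
  have hcase : ∀ i, lam i = -(tau / 2) ∨ tau * lam i = 2 * K := by
    intro i
    rcases mul_eq_zero.mp (h1 i) with h | h
    · left; linarith
    · right; have := h2 i; rw [h] at this; nlinarith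
  have hkey : ∀ i, tau * (lam i) ^ 2 = (2 * K - tau ^ 2 / 2) * lam i + K * tau := by
    intro i
    rcases hcase i with h | h
    · rw [h]; ring
    · linear_combination (lam i + tau / 2) * h
  have hs : tau * ∑ i, (lam i) ^ 2
      = (2 * K - tau ^ 2 / 2) * ∑ i, lam i + (n₁ : ℝ) * (K * tau) := by
    rw [Finset.mul_sum, Finset.mul_sum]
    simp_rw [hkey]
    rw [Finset.sum_add_distrib, Finset.sum_const, Finset.card_univ, Fintype.card_fin,
      nsmul_eq_mul]
  have hKtau : tau * (2 * K - tau ^ 2 / 2) = 0 := by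
    have h3' : tau * (tau ^ 2 / 4 - ((n₁ : ℝ) + 1) * K + ∑ i, (lam i) ^ 2) = 0 := by
      rw [h3]; ring
    rw [hsum] at hs
    nlinarith [hs, h3']
  have hK : K = tau ^ 2 / 4 := by
    rcases mul_eq_zero.mp hKtau with h | h
    · exact absurd h htau_ne
    · linarith
  have hKpos : 0 < K := by
    rw [hK]; positivity
  have hmu : ∀ i, mu i = 0 := by
    intro i
    by_contra hne
    rcases mul_eq_zero.mp (h1 i) with h | h
    · have hl : lam i = -(tau / 2) := by linarith
      have := h2 i
      rw [hl] at this
      nlinarith [sq_nonneg (mu i), sq_nonneg tau]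
    · exact hne h
  have hlam : ∀ i, lam i = tau / 2 := by
    intro i
    have := h2 i
    rw [hmu i] at this
    have h2' : tau / 2 * lam i = K := by nlinarith
    rw [hK] at h2'
    have : tau * (lam i - tau / 2) = 0 := by nlinarith
    rcases mul_eq_zero.mp this with h | h
    · exact absurd h htau_ne
    · linarith
  have hsum2 : (n₁ : ℝ) * (tau / 2) = 3 / 2 * tau := by
    rw [← hsum]
    simp_rw [hlam]
    rw [Finset.sum_const, Finset.card_univ, Fintype.card_fin, nsmul_eq_mul]
  have hn3 : (n₁ : ℝ) = 3 := by
    have h : (tau / 2) * ((n₁ : ℝ) - 3) = 0 := by linarith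
    rcases mul_eq_zero.mp h with h | h
    · exact absurd (by linarith : tau = 0) htau_ne
    · linarith
  have hn₁ : n₁ = 3 := by exact_mod_cast hn3
  have hsqrt : Real.sqrt K = |tau| / 2 := by
    rw [hK, show tau ^ 2 / 4 = (|tau| / 2) ^ 2 by rw [div_pow, sq_abs]; norm_num]
    exact Real.sqrt_sq (by positivity)
  refine ⟨hn₁, hKpos, hmu, ?_⟩
  rcases lt_or_gt_of_ne htau_ne with hneg | hpos
  · right
    have habs : |tau| = -tau := abs_of_neg hneg
    constructor
    · intro i; rw [hlam i, hsqrt, habs]; ring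
    · rw [hsqrt, habs]; ring
  · left
    have habs : |tau| = tau := abs_of_pos hpos
    constructor
    · intro i; rw [hlam i, hsqrt, habs]
    · rw [hsqrt, habs]; ring
end

section
/- Let n₁ ≥ 1, K ∈ ℝ, and let (λ₁,…,λ_{n₁}, μ₁,…,μ_{n₁}) be real-analytic functions on an open interval I satisfying equations (i) and (ii) of the system (ODE), and suppose τ is not identically zero on I. Fix indices i ≠ j. If λᵢ = λⱼ identically on I, then either μᵢ = μⱼ identically on I or λᵢ = −τ/2 identically on I. Conversely, if μᵢ = μⱼ identically on I, then λᵢ = λⱼ identically on I. -/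
/-!
If `λᵢ ≡ λⱼ`, subtracting equation (i) for `j` from the one for `i` gives
`(τ/2 + λᵢ)(μᵢ - μⱼ) ≡ 0`; if `μᵢ ≡ μⱼ`, subtracting equation (ii) gives `τ (λᵢ - λⱼ) ≡ 0`.
Since `τ` and `τ/2 + λᵢ` are analytic, one factor of each product vanishes identically on the
interval, and `τ ≢ 0` excludes the first factor in the second case.
-/

open Set

theorem HasDerivAt.eq_of_eqOn {𝕜 F : Type*} [NontriviallyNormedField 𝕜] [NormedAddCommGroup F]
    [NormedSpace 𝕜 F] {f g : 𝕜 → F} {f' g' : F} {U : Set 𝕜} {t : 𝕜} (hU : IsOpen U)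
    (hfg : EqOn f g U) (ht : t ∈ U) (hf : HasDerivAt f f' t) (hg : HasDerivAt g g' t) :
    f' = g' :=
  hf.unique (hg.congr_of_eventuallyEq (hfg.eventuallyEq_of_mem (hU.mem_nhds ht)))

section

variable {I : Set ℝ} {τ l₁ l₂ m₁ m₂ : ℝ → ℝ}

theorem mul_sub_eq_zero_of_eqOn_of_hasDerivAt_lam (hI : IsOpen I)
    (h₁ : ∀ t ∈ I, HasDerivAt l₁ ((τ t / 2 + l₁ t) * m₁ t) t)
    (h₂ : ∀ t ∈ I, HasDerivAt l₂ ((τ t / 2 + l₂ t) * m₂ t) t) (hl : EqOn l₁ l₂ I) :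
    ∀ t ∈ I, (τ t / 2 + l₁ t) * (m₁ t - m₂ t) = 0 := by
  intro t ht
  have := (h₁ t ht).eq_of_eqOn hI hl ht (h₂ t ht)
  rw [← hl ht] at this
  linear_combination this

theorem mul_sub_eq_zero_of_eqOn_of_hasDerivAt_mu (hI : IsOpen I) (K : ℝ)
    (h₁ : ∀ t ∈ I, HasDerivAt m₁ (m₁ t ^ 2 - τ t / 2 * l₁ t + K) t)
    (h₂ : ∀ t ∈ I, HasDerivAt m₂ (m₂ t ^ 2 - τ t / 2 * l₂ t + K) t) (hm : EqOn m₁ m₂ I) :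
    ∀ t ∈ I, τ t * (l₁ t - l₂ t) = 0 := by
  intro t ht
  have := (h₁ t ht).eq_of_eqOn hI hm ht (h₂ t ht)
  rw [← hm ht] at this
  linear_combination -2 * this

end

theorem stmt_5_general (n₁ : ℕ) (K : ℝ)
    (I : Set ℝ) (hI : IsOpen I) (hIconn : I.OrdConnected)
    (lam mu : Fin n₁ → ℝ → ℝ)
    (hlam : ∀ i, AnalyticOnNhd ℝ (lam i) I)
    (hmu : ∀ i, AnalyticOnNhd ℝ (mu i) I)
    (tau : ℝ → ℝ) (htau : ∀ t, tau t = (2/3) * ∑ i, lam i t)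
    (hode1 : ∀ i, ∀ t ∈ I, HasDerivAt (lam i) ((tau t / 2 + lam i t) * mu i t) t)
    (hode2 : ∀ i, ∀ t ∈ I,
      HasDerivAt (mu i) ((mu i t) ^ 2 - tau t / 2 * lam i t + K) t)
    (htau_ne : ¬ ∀ t ∈ I, tau t = 0)
    (i j : Fin n₁) :
    ((∀ t ∈ I, lam i t = lam j t) →
      ((∀ t ∈ I, mu i t = mu j t) ∨ (∀ t ∈ I, lam i t = -(tau t) / 2))) ∧
    ((∀ t ∈ I, mu i t = mu j t) → (∀ t ∈ I, lam i t = lam j t)) := by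
  have hIc : IsPreconnected I := hIconn.isPreconnected
  have htau_an : AnalyticOnNhd ℝ tau I := by
    rw [funext htau]
    exact analyticOnNhd_const.mul (Finset.analyticOnNhd_fun_sum _ fun k _ ↦ hlam k)
  refine ⟨fun hl ↦ ?_, fun hm ↦ ?_⟩
  · rcases (htau_an.div_const.add (hlam i)).eq_zero_or_eq_zero_of_mul_eq_zero
      ((hmu i).sub (hmu j))
      (mul_sub_eq_zero_of_eqOn_of_hasDerivAt_lam hI (hode1 i) (hode1 j) hl) hIc with h | h
    · exact Or.inr fun t ht ↦ by linarith [show tau t / 2 + lam i t = 0 from h t ht]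
    · exact Or.inl fun t ht ↦ sub_eq_zero.mp (h t ht)
  · rcases htau_an.eq_zero_or_eq_zero_of_mul_eq_zero ((hlam i).sub (hlam j))
      (mul_sub_eq_zero_of_eqOn_of_hasDerivAt_mu hI K (hode2 i) (hode2 j) hm) hIc with h | h
    · exact absurd h htau_ne
    · exact fun t ht ↦ sub_eq_zero.mp (h t ht)

/-- Lemma (same λ ⟺ same μ): for a real-analytic solution of equations (i), (ii)
with `τ` not identically zero, `λᵢ ≡ λⱼ` implies `μᵢ ≡ μⱼ` or `λᵢ ≡ -τ/2`;
conversely `μᵢ ≡ μⱼ` implies `λᵢ ≡ λⱼ`. -/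
theorem stmt_5 (n₁ : ℕ) (hn : 1 ≤ n₁) (K : ℝ)
    (I : Set ℝ) (hI : IsOpen I) (hIconn : I.OrdConnected)
    (lam mu : Fin n₁ → ℝ → ℝ)
    (hlam : ∀ i, AnalyticOnNhd ℝ (lam i) I)
    (hmu : ∀ i, AnalyticOnNhd ℝ (mu i) I)
    (tau : ℝ → ℝ) (htau : ∀ t, tau t = (2/3) * ∑ i, lam i t)
    (hode1 : ∀ i, ∀ t ∈ I, HasDerivAt (lam i) ((tau t / 2 + lam i t) * mu i t) t)
    (hode2 : ∀ i, ∀ t ∈ I,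
      HasDerivAt (mu i) ((mu i t) ^ 2 - tau t / 2 * lam i t + K) t)
    (htau_ne : ¬ ∀ t ∈ I, tau t = 0)
    (i j : Fin n₁) (hij : i ≠ j) :
    ((∀ t ∈ I, lam i t = lam j t) →
      ((∀ t ∈ I, mu i t = mu j t) ∨ (∀ t ∈ I, lam i t = -(tau t) / 2))) ∧
    ((∀ t ∈ I, mu i t = mu j t) → (∀ t ∈ I, lam i t = lam j t)) :=
  stmt_5_general n₁ K I hI hIconn lam mu hlam hmu tau htau hode1 hode2 htau_ne i j
end

section
/- Let n₁ ≥ 1 and K = 0, and let (λ₁,…,λ_{n₁}, μ₁,…,μ_{n₁}) be a real-analytic solution of the system (ODE) on an open interval I such that all the λᵢ coincide: λ₁ = λ₂ = ⋯ = λ_{n₁} on I. Then τ ≡ 0 on I (equivalently, all λᵢ vanish identically). -/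
/-!
Where `τ ≠ 0` the common value `λ` of the `λᵢ` does not vanish, so neither does the factor
`τ/2 + λ = (m + 3)/3 · λ` (with `m = n₁`) in `λᵢ' = (τ/2 + λᵢ) μᵢ`; hence all `μᵢ` agree as well
and (ODE) collapses to a planar system for `(λ, μ)`. Equation (iii) then becomes the algebraic
relation `(m² - 9) μ² + (m² + 6m) λ² = 0`. Differentiating it along the flow and using it once more
gives `(2m² + 3m) μ λ² = 0`, so `μ = 0`, whence `λ = 0`: a contradiction.
-/

open Filter Topology

/-- The system (ODE) with `K = 0` at the point `s`, when `λ₁ = ⋯ = λ_m = lam` and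
`μ₁ = ⋯ = μ_m = mu` near `s`. -/
structure IsReducedSolutionAt (m : ℝ) (lam mu tau : ℝ → ℝ) (s : ℝ) : Prop where
  tau_eq : tau s = 2 * m / 3 * lam s
  hasDerivAt_lam : HasDerivAt lam ((m + 3) / 3 * lam s * mu s) s
  hasDerivAt_mu : HasDerivAt mu (mu s ^ 2 - m / 3 * lam s ^ 2) s
  tau_ode : -deriv (deriv tau) s + deriv tau s * (m * mu s)
    + tau s * (tau s ^ 2 / 4 + m * lam s ^ 2) = 0

theorem isReducedSolutionAt_of_eventuallyEq {ι : Type*} [Fintype ι] {lam mu : ι → ℝ → ℝ}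
    {tau : ℝ → ℝ} {i₀ : ι} {s : ℝ} (hall : ∀ i, lam i =ᶠ[𝓝 s] lam i₀) (hl : lam i₀ s ≠ 0)
    (htau : tau s = 2 / 3 * ∑ i, lam i s)
    (hode1 : ∀ i, HasDerivAt (lam i) ((tau s / 2 + lam i s) * mu i s) s)
    (hode2 : HasDerivAt (mu i₀) (mu i₀ s ^ 2 - tau s / 2 * lam i₀ s) s)
    (hode3 : -deriv (deriv tau) s + deriv tau s * ∑ i, mu i s
      + tau s * (tau s ^ 2 / 4 + ∑ i, lam i s ^ 2) = 0) :
    IsReducedSolutionAt (Fintype.card ι) (lam i₀) (mu i₀) tau s := by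
  set m : ℝ := (Fintype.card ι : ℝ)
  have hlam (i : ι) : lam i s = lam i₀ s := (hall i).eq_of_nhds
  have htau' : tau s = 2 * m / 3 * lam i₀ s := by
    simp only [htau, hlam, Finset.sum_const, Finset.card_univ, nsmul_eq_mul, m]
    ring
  have hmu (i : ι) : mu i s = mu i₀ s := by
    have hfactor : tau s / 2 + lam i₀ s ≠ 0 := by
      rw [htau', show 2 * m / 3 * lam i₀ s / 2 + lam i₀ s = (m + 3) / 3 * lam i₀ s by ring]
      exact mul_ne_zero (by positivity) hl
    have h := ((hode1 i).congr_of_eventuallyEq (hall i).symm).unique (hode1 i₀)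
    rw [hlam i] at h
    exact mul_left_cancel₀ hfactor h
  refine ⟨htau', (hode1 i₀).congr_deriv (by rw [htau']; ring),
    hode2.congr_deriv (by rw [htau']; ring), ?_⟩
  simpa only [hmu, hlam, Finset.sum_const, Finset.card_univ, nsmul_eq_mul] using hode3

section ReducedSystem

variable {m : ℝ} {lam mu tau : ℝ → ℝ} {t : ℝ}

theorem IsReducedSolutionAt.quadratic_eq_zero (hm : m ≠ 0) (hl : lam t ≠ 0)
    (h : ∀ᶠ s in 𝓝 t, IsReducedSolutionAt m lam mu tau s) :
    (m ^ 2 - 9) * mu t ^ 2 + (m ^ 2 + 6 * m) * lam t ^ 2 = 0 := by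
  have hτ : tau =ᶠ[𝓝 t] fun s => 2 * m / 3 * lam s := by
    filter_upwards [h] with s hs using hs.tau_eq
  have hτ' : deriv tau =ᶠ[𝓝 t] fun s => 2 * m / 3 * ((m + 3) / 3 * lam s * mu s) := by
    filter_upwards [hτ.eventuallyEq_nhds, h] with s hτs hs
    rw [hτs.deriv_eq]
    exact (hs.hasDerivAt_lam.const_mul _).deriv
  have ht := h.self_of_nhds
  have hτ'' : deriv (deriv tau) t
      = 2 * m / 3 * ((m + 3) / 3 * lam t * ((m + 6) / 3 * mu t ^ 2 - m / 3 * lam t ^ 2)) := by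
    rw [hτ'.deriv_eq]
    refine ((((ht.hasDerivAt_lam.const_mul ((m + 3) / 3)).mul ht.hasDerivAt_mu).const_mul
      (2 * m / 3))).deriv.trans ?_
    ring
  have hode := ht.tau_ode
  rw [hτ'', hτ'.eq_of_nhds, hτ.eq_of_nhds] at hode
  have hfactored : 4 * m * lam t / 27
      * ((m ^ 2 - 9) * mu t ^ 2 + (m ^ 2 + 6 * m) * lam t ^ 2) = 0 := by
    linear_combination hode
  exact (mul_eq_zero.mp hfactored).resolve_left (by positivity)

theorem eq_zero_of_eventually_quadratic_eq_zero (hm : 0 < m)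
    (hlam : HasDerivAt lam ((m + 3) / 3 * lam t * mu t) t)
    (hmu : HasDerivAt mu (mu t ^ 2 - m / 3 * lam t ^ 2) t)
    (hQ : ∀ᶠ s in 𝓝 t, (m ^ 2 - 9) * mu s ^ 2 + (m ^ 2 + 6 * m) * lam s ^ 2 = 0) :
    lam t = 0 := by
  have hQt := hQ.self_of_nhds
  have hderiv : (m ^ 2 - 9) * (2 * mu t * (mu t ^ 2 - m / 3 * lam t ^ 2))
      + (m ^ 2 + 6 * m) * (2 * lam t * ((m + 3) / 3 * lam t * mu t)) = 0 := by
    have hQ' := ((hmu.pow 2).const_mul (m ^ 2 - 9)).add ((hlam.pow 2).const_mul (m ^ 2 + 6 * m))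
    linear_combination hQ'.unique ((hasDerivAt_const t (0 : ℝ)).congr_of_eventuallyEq hQ)
  have hmul : 2 * m * (2 * m + 3) * (mu t * lam t ^ 2) = 0 := by
    linear_combination hderiv - 2 * mu t * hQt
  by_contra hl
  have hmu0 : mu t = 0 := by
    simpa [hm.ne', hl, (by positivity : 2 * m + 3 ≠ 0)] using hmul
  rw [hmu0] at hQt
  have : 0 < (m ^ 2 + 6 * m) * lam t ^ 2 := by positivity
  linarith

theorem IsReducedSolutionAt.not_eventually_and_ne_zero (hm : 0 < m) :
    ¬∀ᶠ s in 𝓝 t, IsReducedSolutionAt m lam mu tau s ∧ lam s ≠ 0 := by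
  intro h
  have hQ : ∀ᶠ s in 𝓝 t, (m ^ 2 - 9) * mu s ^ 2 + (m ^ 2 + 6 * m) * lam s ^ 2 = 0 := by
    filter_upwards [h.eventually_nhds] with s hs
    exact IsReducedSolutionAt.quadratic_eq_zero hm.ne' hs.self_of_nhds.2 (hs.mono fun _ ↦ And.left)
  have ht := h.self_of_nhds
  exact ht.2 (eq_zero_of_eventually_quadratic_eq_zero hm ht.1.hasDerivAt_lam ht.1.hasDerivAt_mu hQ)

end ReducedSystem

theorem stmt_6_general (n₁ : ℕ) (K : ℝ) (hK : K = 0)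
    (I : Set ℝ) (hI : IsOpen I)
    (lam mu : Fin n₁ → ℝ → ℝ)
    (tau : ℝ → ℝ) (htau : ∀ t, tau t = (2/3) * ∑ i, lam i t)
    (hode1 : ∀ i, ∀ t ∈ I, HasDerivAt (lam i) ((tau t / 2 + lam i t) * mu i t) t)
    (hode2 : ∀ i, ∀ t ∈ I,
      HasDerivAt (mu i) ((mu i t) ^ 2 - tau t / 2 * lam i t + K) t)
    (hode3 : ∀ t ∈ I,
      -(deriv (deriv tau) t) + deriv tau t * (∑ i, mu i t)
        + tau t * ((tau t) ^ 2 / 4 - ((n₁ : ℝ) + 1) * K + ∑ i, (lam i t) ^ 2) = 0)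
    (hall : ∀ i j : Fin n₁, ∀ t ∈ I, lam i t = lam j t) :
    ∀ t ∈ I, tau t = 0 := by
  subst hK
  simp only [add_zero, mul_zero, sub_zero] at hode2 hode3
  intro t₀ ht₀
  by_contra hτ₀
  rw [htau t₀] at hτ₀
  obtain ⟨i₀, -, hi₀⟩ := Finset.exists_ne_zero_of_sum_ne_zero (right_ne_zero_of_mul hτ₀)
  have hm : (0 : ℝ) < Fintype.card (Fin n₁) := Nat.cast_pos.mpr (Fintype.card_pos_iff.mpr ⟨i₀⟩)
  refine IsReducedSolutionAt.not_eventually_and_ne_zero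
    (lam := lam i₀) (mu := mu i₀) (tau := tau) (t := t₀) hm ?_
  filter_upwards [hI.mem_nhds ht₀, (hode1 i₀ t₀ ht₀).continuousAt.eventually_ne hi₀]
    with s hs hls
  have hall_near (i : Fin n₁) : lam i =ᶠ[𝓝 s] lam i₀ :=
    eventually_of_mem (hI.mem_nhds hs) (hall i i₀)
  exact ⟨isReducedSolutionAt_of_eventuallyEq hall_near hls (htau s) (fun i ↦ hode1 i s hs)
    (hode2 i₀ s hs) (hode3 s hs), hls⟩

/-- Lemma (all λᵢ equal): a real-analytic solution of the ODE system with `K = 0`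
in which all the `λᵢ` coincide must have `τ ≡ 0`. -/
theorem stmt_6 (n₁ : ℕ) (hn : 1 ≤ n₁) (K : ℝ) (hK : K = 0)
    (I : Set ℝ) (hI : IsOpen I) (hIconn : I.OrdConnected)
    (lam mu : Fin n₁ → ℝ → ℝ)
    (hlam : ∀ i, AnalyticOnNhd ℝ (lam i) I)
    (hmu : ∀ i, AnalyticOnNhd ℝ (mu i) I)
    (tau : ℝ → ℝ) (htau : ∀ t, tau t = (2/3) * ∑ i, lam i t)
    (hode1 : ∀ i, ∀ t ∈ I, HasDerivAt (lam i) ((tau t / 2 + lam i t) * mu i t) t)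
    (hode2 : ∀ i, ∀ t ∈ I,
      HasDerivAt (mu i) ((mu i t) ^ 2 - tau t / 2 * lam i t + K) t)
    (hode3 : ∀ t ∈ I,
      -(deriv (deriv tau) t) + deriv tau t * (∑ i, mu i t)
        + tau t * ((tau t) ^ 2 / 4 - ((n₁ : ℝ) + 1) * K + ∑ i, (lam i t) ^ 2) = 0)
    (hall : ∀ i j : Fin n₁, ∀ t ∈ I, lam i t = lam j t) :
    ∀ t ∈ I, tau t = 0 :=
  stmt_6_general n₁ K hK I hI lam mu tau htau hode1 hode2 hode3 hall
end

section
/- Let n₁ ≥ 1 and K = 0, let (λ₁,…,λ_{n₁}, μ₁,…,μ_{n₁}) be a real-analytic solution of the system (ODE) on an open interval I with τ not identically zero, and suppose there are real-analytic functions φ, ψ on I with μᵢ = φ·λᵢ + ψ for all i = 1,…,n₁. Then on I: φ' = −(τ/2)(φ² + 1) + φψ and ψ' = (ψ − (τ/2)φ)·ψ. -/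
open Filter Topology Set

/-! Differentiating `μᵢ = φλᵢ + ψ` and substituting the system gives `λᵢ A + B = 0` for every `i`,
where `A = 0` and `B = 0` are the two claimed equations. If two of the `λᵢ` differ at some point,
`A` vanishes near it, hence on all of `I` by analytic continuation, and then so does `B`. If
instead all `λᵢ` coincide, then so do all `μᵢ` wherever `τ ≠ 0`, and the system collapses to a
scalar one for `(τ, μ)`; there the third equation forces a polynomial relation between `μ` and
`τ` whose derivative, combined with it, gives `μ = τ = 0`. -/

noncomputable def phiDefect (tau phi psi : ℝ → ℝ) (t : ℝ) : ℝ :=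
  deriv phi t + tau t / 2 * (phi t ^ 2 + 1) - phi t * psi t

noncomputable def psiDefect (tau phi psi : ℝ → ℝ) (t : ℝ) : ℝ :=
  deriv psi t - (psi t - tau t / 2 * phi t) * psi t

theorem mul_phiDefect_add_psiDefect_eq_zero {lam mu phi psi tau : ℝ → ℝ} {t : ℝ}
    (hphi : DifferentiableAt ℝ phi t) (hpsi : DifferentiableAt ℝ psi t)
    (hlam : HasDerivAt lam ((tau t / 2 + lam t) * mu t) t)
    (hmu : HasDerivAt mu (mu t ^ 2 - tau t / 2 * lam t) t)
    (hlin : mu =ᶠ[𝓝 t] fun s => phi s * lam s + psi s) :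
    lam t * phiDefect tau phi psi t + psiDefect tau phi psi t = 0 := by
  have hmu' : HasDerivAt mu (deriv phi t * lam t + phi t * ((tau t / 2 + lam t) * mu t)
      + deriv psi t) t :=
    ((hphi.hasDerivAt.mul hlam).add hpsi.hasDerivAt).congr_of_eventuallyEq hlin
  have hderiv := hmu.unique hmu'
  rw [hlin.eq_of_nhds] at hderiv
  unfold phiDefect psiDefect
  linear_combination -hderiv

theorem eqOn_zero_of_mul_add_eq_zero {𝕜 : Type*} [NontriviallyNormedField 𝕜]
    {f g a b : 𝕜 → 𝕜} {U : Set 𝕜} (hU : IsOpen U) (hUc : IsPreconnected U)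
    (ha : AnalyticOnNhd 𝕜 a U) {t₁ : 𝕜} (ht₁ : t₁ ∈ U)
    (hf : ContinuousAt f t₁) (hg : ContinuousAt g t₁) (hfg : f t₁ ≠ g t₁)
    (hfab : ∀ t ∈ U, f t * a t + b t = 0) (hgab : ∀ t ∈ U, g t * a t + b t = 0) :
    EqOn a 0 U := by
  refine ha.eqOn_zero_of_preconnected_of_eventuallyEq_zero hUc ht₁ ?_
  filter_upwards [(hf.sub hg).eventually_ne (sub_ne_zero.mpr hfg), hU.mem_nhds ht₁]
    with t hne ht
  have hprod : (f t - g t) * a t = 0 := by linear_combination hfab t ht - hgab t ht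
  exact (mul_eq_zero.mp hprod).resolve_left hne

theorem AnalyticOnNhd.phiDefect {tau phi psi : ℝ → ℝ} {U : Set ℝ}
    (htau : AnalyticOnNhd ℝ tau U) (hphi : AnalyticOnNhd ℝ phi U)
    (hpsi : AnalyticOnNhd ℝ psi U) : AnalyticOnNhd ℝ (phiDefect tau phi psi) U := by
  have hhalf : AnalyticOnNhd ℝ (fun t => tau t / 2) U := htau.div_const
  exact (hphi.deriv.add (hhalf.mul ((hphi.pow 2).add analyticOnNhd_const))).sub (hphi.mul hpsi)

section DiagonalSystem

variable {c : ℝ} {U : Set ℝ} {tau lam mu : ℝ → ℝ}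

theorem hasDerivAt_of_diagonal (hU : IsOpen U) (htau : ∀ t ∈ U, tau t = 2 / 3 * c * lam t)
    (hlam : ∀ t ∈ U, HasDerivAt lam ((tau t / 2 + lam t) * mu t) t) {t : ℝ} (ht : t ∈ U) :
    HasDerivAt tau ((c + 3) / 3 * (tau t * mu t)) t := by
  refine (((hlam t ht).const_mul (2 / 3 * c)).congr_of_eventuallyEq
    (eventually_of_mem (hU.mem_nhds ht) htau)).congr_deriv ?_
  rw [htau t ht]
  ring

theorem mul_mu_sq_eq_of_diagonal (hU : IsOpen U) (htau0 : ∀ t ∈ U, tau t ≠ 0)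
    (htau : ∀ t ∈ U, tau t = 2 / 3 * c * lam t)
    (hlam : ∀ t ∈ U, HasDerivAt lam ((tau t / 2 + lam t) * mu t) t)
    (hmu : ∀ t ∈ U, HasDerivAt mu (mu t ^ 2 - tau t / 2 * lam t) t)
    (hode : ∀ t ∈ U, -deriv (deriv tau) t + deriv tau t * (c * mu t)
      + tau t * (tau t ^ 2 / 4 + c * lam t ^ 2) = 0) {t : ℝ} (ht : t ∈ U) :
    c * (c + 3) * (6 - 2 * c) * mu t ^ 2 = 9 / 2 * (c + 6) * tau t ^ 2 := by
  have htau' : ∀ s ∈ U, HasDerivAt tau ((c + 3) / 3 * (tau s * mu s)) s :=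
    fun s hs => hasDerivAt_of_diagonal hU htau hlam hs
  have hdev : deriv tau =ᶠ[𝓝 t] fun s => (c + 3) / 3 * (tau s * mu s) :=
    eventually_of_mem (hU.mem_nhds ht) fun s hs => (htau' s hs).deriv
  have htau'' : deriv (deriv tau) t
      = (c + 3) / 3 * ((c + 3) / 3 * (tau t * mu t) * mu t
        + tau t * (mu t ^ 2 - tau t / 2 * lam t)) := by
    rw [hdev.deriv_eq]
    exact (((htau' t ht).mul (hmu t ht)).const_mul _).deriv
  have h := hode t ht
  rw [htau'', (htau' t ht).deriv] at h
  have hprod :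
      tau t * (c * (c + 3) * (6 - 2 * c) * mu t ^ 2 - 9 / 2 * (c + 6) * tau t ^ 2) = 0 := by
    linear_combination (-9 * c) * h
      + (-3) * (tau t * ((9 * c / 2) * lam t + ((3 * c + 36) / 4) * tau t)) * htau t ht
  exact sub_eq_zero.mp ((mul_eq_zero.mp hprod).resolve_left (htau0 t ht))

theorem eq_empty_of_diagonal (hc : 0 < c) (hU : IsOpen U) (htau0 : ∀ t ∈ U, tau t ≠ 0)
    (htau : ∀ t ∈ U, tau t = 2 / 3 * c * lam t)
    (hlam : ∀ t ∈ U, HasDerivAt lam ((tau t / 2 + lam t) * mu t) t)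
    (hmu : ∀ t ∈ U, HasDerivAt mu (mu t ^ 2 - tau t / 2 * lam t) t)
    (hode : ∀ t ∈ U, -deriv (deriv tau) t + deriv tau t * (c * mu t)
      + tau t * (tau t ^ 2 / 4 + c * lam t ^ 2) = 0) :
    U = ∅ := by
  set a := c * (c + 3) * (6 - 2 * c)
  set b := 9 / 2 * (c + 6)
  have hF : ∀ t ∈ U, a * mu t ^ 2 - b * tau t ^ 2 = 0 := fun t ht =>
    sub_eq_zero.mpr (mul_mu_sq_eq_of_diagonal hU htau0 htau hlam hmu hode ht)
  refine eq_empty_of_forall_notMem fun t₀ ht₀ => htau0 t₀ ht₀ ?_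
  have hF' : HasDerivAt (fun t => a * mu t ^ 2 - b * tau t ^ 2)
      (a * (2 * mu t₀ * (mu t₀ ^ 2 - tau t₀ / 2 * lam t₀))
        - b * (2 * tau t₀ * ((c + 3) / 3 * (tau t₀ * mu t₀)))) t₀ := by
    refine ((((hmu t₀ ht₀).pow 2).const_mul a).sub
      (((hasDerivAt_of_diagonal hU htau hlam ht₀).pow 2).const_mul b)).congr_deriv ?_
    push_cast
    ring
  have hF'0 := hF'.unique ((hasDerivAt_const t₀ 0).congr_of_eventuallyEq
    (eventually_of_mem (hU.mem_nhds ht₀) hF))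
  have hF0 := hF t₀ ht₀
  -- combining the relation with its derivative eliminates `μ³`
  have hcrit : tau t₀ ^ 2 * mu t₀ * (18 * c ^ 2 + 27 * c) = 0 := by
    linear_combination (-c) * hF'0 + (2 * c * mu t₀) * hF0
      + (3 * a * tau t₀ * mu t₀ / 2) * htau t₀ ht₀
  have hmu0 : mu t₀ = 0 := by
    have hcoef : 18 * c ^ 2 + 27 * c ≠ 0 := by positivity
    simpa [htau0 t₀ ht₀, hcoef] using hcrit
  have hb : b ≠ 0 := by positivity
  simpa [hmu0, hb] using hF0

end DiagonalSystem

theorem exists_lam_ne_of_tau_ne_zero {n₁ : ℕ} {I : Set ℝ} (hI : IsOpen I)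
    {lam mu : Fin n₁ → ℝ → ℝ} {tau : ℝ → ℝ} (htau : ∀ t, tau t = 2 / 3 * ∑ i, lam i t)
    (hode1 : ∀ i, ∀ t ∈ I, HasDerivAt (lam i) ((tau t / 2 + lam i t) * mu i t) t)
    (hode2 : ∀ i, ∀ t ∈ I, HasDerivAt (mu i) (mu i t ^ 2 - tau t / 2 * lam i t) t)
    (hode3 : ∀ t ∈ I, -deriv (deriv tau) t + deriv tau t * ∑ i, mu i t
      + tau t * (tau t ^ 2 / 4 + ∑ i, lam i t ^ 2) = 0)
    {t₀ : ℝ} (ht₀ : t₀ ∈ I) (htau₀ : tau t₀ ≠ 0) :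
    ∃ t ∈ I, ∃ i j, lam i t ≠ lam j t := by
  by_contra! hlam
  obtain ⟨i₀, -, -⟩ : ∃ i ∈ Finset.univ, lam i t₀ ≠ 0 :=
    Finset.exists_ne_zero_of_sum_ne_zero (by rw [htau] at htau₀; exact right_ne_zero_of_mul htau₀)
  have hsum_const : ∀ (f : Fin n₁ → ℝ) (x : ℝ), (∀ i, f i = x) → ∑ i, f i = n₁ * x := by
    intro f x hf
    simp [hf]
  have htau_lam : ∀ t ∈ I, tau t = 2 / 3 * n₁ * lam i₀ t := fun t ht => by
    rw [htau, hsum_const _ _ fun i => hlam t ht i i₀, mul_assoc]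
  have hcont : ContinuousOn tau I := fun t ht =>
    (hasDerivAt_of_diagonal hI htau_lam (hode1 i₀) ht).continuousAt.continuousWithinAt
  set U := I ∩ tau ⁻¹' {0}ᶜ
  have hmu : ∀ t ∈ U, ∀ i, mu i t = mu i₀ t := by
    rintro t ⟨ht, htau0⟩ i
    have hderiv := (hode1 i t ht).unique ((hode1 i₀ t ht).congr_of_eventuallyEq
      (eventually_of_mem (hI.mem_nhds ht) fun s hs => hlam s hs i i₀))
    rw [hlam t ht i i₀] at hderiv
    refine mul_left_cancel₀ (fun h => htau0 (show tau t = 0 from ?_)) hderiv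
    have hlam0 : (n₁ + 3 : ℝ) * lam i₀ t = 0 := by
      linear_combination 3 * h - 3 / 2 * htau_lam t ht
    rw [htau_lam t ht, (mul_eq_zero.mp hlam0).resolve_left (by positivity), mul_zero]
  have hU : U = ∅ := eq_empty_of_diagonal (Nat.cast_pos.mpr i₀.pos)
    (hcont.isOpen_inter_preimage hI isOpen_compl_singleton) (fun t ht => ht.2)
    (fun t ht => htau_lam t ht.1) (fun t ht => hode1 i₀ t ht.1) (fun t ht => hode2 i₀ t ht.1)
    fun t ht => by
      simpa only [hsum_const _ _ (hmu t ht),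
          hsum_const (fun i => lam i t ^ 2) _ fun i => by rw [hlam t ht.1 i i₀]]
        using hode3 t ht.1
  exact hU.subset ⟨ht₀, htau₀⟩

theorem stmt_8_general (n₁ : ℕ) (K : ℝ) (hK : K = 0)
    (I : Set ℝ) (hI : IsOpen I) (hIconn : I.OrdConnected)
    (lam mu : Fin n₁ → ℝ → ℝ)
    (hlam : ∀ i, AnalyticOnNhd ℝ (lam i) I)
    (tau : ℝ → ℝ) (htau : ∀ t, tau t = (2/3) * ∑ i, lam i t)
    (hode1 : ∀ i, ∀ t ∈ I, HasDerivAt (lam i) ((tau t / 2 + lam i t) * mu i t) t)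
    (hode2 : ∀ i, ∀ t ∈ I,
      HasDerivAt (mu i) ((mu i t) ^ 2 - tau t / 2 * lam i t + K) t)
    (hode3 : ∀ t ∈ I,
      -(deriv (deriv tau) t) + deriv tau t * (∑ i, mu i t)
        + tau t * ((tau t) ^ 2 / 4 - ((n₁ : ℝ) + 1) * K + ∑ i, (lam i t) ^ 2) = 0)
    (htau_ne : ¬ ∀ t ∈ I, tau t = 0)
    (phi psi : ℝ → ℝ)
    (hphi : AnalyticOnNhd ℝ phi I) (hpsi : AnalyticOnNhd ℝ psi I)
    (hlin : ∀ i, ∀ t ∈ I, mu i t = phi t * lam i t + psi t) :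
    ∀ t ∈ I,
      deriv phi t = -(tau t / 2) * ((phi t) ^ 2 + 1) + phi t * psi t ∧
      deriv psi t = (psi t - tau t / 2 * phi t) * psi t := by
  subst hK
  simp only [add_zero, mul_zero, sub_zero] at hode2 hode3
  have hdefect : ∀ i, ∀ t ∈ I, lam i t * phiDefect tau phi psi t + psiDefect tau phi psi t = 0 :=
    fun i t ht => mul_phiDefect_add_psiDefect_eq_zero (hphi t ht).differentiableAt
      (hpsi t ht).differentiableAt (hode1 i t ht) (hode2 i t ht)
      (eventually_of_mem (hI.mem_nhds ht) (hlin i))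
  obtain ⟨t₀, ht₀, htau₀⟩ : ∃ t ∈ I, tau t ≠ 0 := by simpa using htau_ne
  obtain ⟨t₁, ht₁, i, j, hij⟩ := exists_lam_ne_of_tau_ne_zero hI htau hode1 hode2 hode3 ht₀ htau₀
  have htau_an : AnalyticOnNhd ℝ tau I := by
    rw [funext htau]
    exact analyticOnNhd_const.mul (Finset.analyticOnNhd_fun_sum _ fun k _ => hlam k)
  have hphiDefect : EqOn (phiDefect tau phi psi) 0 I :=
    eqOn_zero_of_mul_add_eq_zero hI hIconn.isPreconnected (htau_an.phiDefect hphi hpsi) ht₁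
      (hlam i t₁ ht₁).continuousAt (hlam j t₁ ht₁).continuousAt hij (hdefect i) (hdefect j)
  intro t ht
  have hA : phiDefect tau phi psi t = 0 := hphiDefect ht
  have hB : psiDefect tau phi psi t = 0 := by simpa [hA] using hdefect i t ht
  unfold phiDefect at hA
  unfold psiDefect at hB
  exact ⟨by linear_combination hA, by linear_combination hB⟩

/-- Lemma (`dvp,dpsi`): if `μᵢ = φλᵢ + ψ` for a solution of the ODE system with
`K = 0` and `τ` not identically zero, then `φ' = -(τ/2)(φ²+1) + φψ` and
`ψ' = (ψ - (τ/2)φ)ψ`. -/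
theorem stmt_8 (n₁ : ℕ) (hn : 1 ≤ n₁) (K : ℝ) (hK : K = 0)
    (I : Set ℝ) (hI : IsOpen I) (hIconn : I.OrdConnected)
    (lam mu : Fin n₁ → ℝ → ℝ)
    (hlam : ∀ i, AnalyticOnNhd ℝ (lam i) I)
    (hmu : ∀ i, AnalyticOnNhd ℝ (mu i) I)
    (tau : ℝ → ℝ) (htau : ∀ t, tau t = (2/3) * ∑ i, lam i t)
    (hode1 : ∀ i, ∀ t ∈ I, HasDerivAt (lam i) ((tau t / 2 + lam i t) * mu i t) t)
    (hode2 : ∀ i, ∀ t ∈ I,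
      HasDerivAt (mu i) ((mu i t) ^ 2 - tau t / 2 * lam i t + K) t)
    (hode3 : ∀ t ∈ I,
      -(deriv (deriv tau) t) + deriv tau t * (∑ i, mu i t)
        + tau t * ((tau t) ^ 2 / 4 - ((n₁ : ℝ) + 1) * K + ∑ i, (lam i t) ^ 2) = 0)
    (htau_ne : ¬ ∀ t ∈ I, tau t = 0)
    (phi psi : ℝ → ℝ)
    (hphi : AnalyticOnNhd ℝ phi I) (hpsi : AnalyticOnNhd ℝ psi I)
    (hlin : ∀ i, ∀ t ∈ I, mu i t = phi t * lam i t + psi t) :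
    ∀ t ∈ I,
      deriv phi t = -(tau t / 2) * ((phi t) ^ 2 + 1) + phi t * psi t ∧
      deriv psi t = (psi t - tau t / 2 * phi t) * psi t :=
  stmt_8_general n₁ K hK I hI hIconn lam mu hlam tau htau hode1 hode2 hode3 htau_ne phi psi hphi
    hpsi hlin
end

section
/- Let n₁ ≥ 1 and K = 0, and let (λ₁,…,λ_{n₁}, μ₁,…,μ_{n₁}) be a real-analytic solution of the system (ODE) on an open interval I such that all the μᵢ coincide: μ₁ = μ₂ = ⋯ = μ_{n₁} on I (i.e., the linear relation μᵢ = φλᵢ + ψ holds with φ ≡ 0). Then τ ≡ 0 on I. -/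
/-!
Suppose `τ(t₀) ≠ 0` and work on the open set `U` where `τ ≠ 0`. Differentiating `μᵢ = μⱼ` with
(ii) gives `τ λᵢ = τ λⱼ`, so on `U` all `λᵢ` equal one function `λ ≠ 0`, `τ = 2n₁λ/3`, and with
`N = n₁` the system reduces to `λ' = (N+3)/3 λμ`, `μ' = μ² − N/3 λ²`. Equation (iii) then becomes
`λ · H = 0` for `H = (N+3)(N−3)μ² + N(N+6)λ²`, so `H ≡ 0` on `U`; differentiating,
`0 = H' = 2μH + 2N(2N+3)λ²μ` forces `μ ≡ 0`, and then `0 = μ' = −Nλ²/3` contradicts `λ ≠ 0`.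
-/

open Filter Topology Finset

theorem HasDerivAt.eq_zero_of_eqOn_const {f : ℝ → ℝ} {f' c t : ℝ} {U : Set ℝ} (hU : IsOpen U)
    (ht : t ∈ U) (hf : HasDerivAt f f' t) (hc : ∀ s ∈ U, f s = c) : f' = 0 :=
  hf.unique <| (hasDerivAt_const t c).congr_of_eventuallyEq <|
    eventuallyEq_of_mem (hU.mem_nhds ht) hc

section ReducedSystem

variable {N : ℝ} {U : Set ℝ} {l m : ℝ → ℝ}

theorem reduced_quadric_eq_zero (hN : N ≠ 0) (hU : IsOpen U)
    (hl : ∀ t ∈ U, HasDerivAt l ((N + 3) / 3 * l t * m t) t)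
    (hm : ∀ t ∈ U, HasDerivAt m (m t ^ 2 - N / 3 * l t ^ 2) t)
    (hl0 : ∀ t ∈ U, l t ≠ 0) {T : ℝ → ℝ} (hT : ∀ t ∈ U, T t = 2 / 3 * N * l t)
    (h3 : ∀ t ∈ U,
      -(deriv (deriv T) t) + deriv T t * (N * m t) + T t * (T t ^ 2 / 4 + N * l t ^ 2) = 0) :
    ∀ t ∈ U, (N + 3) * (N - 3) * m t ^ 2 + N * (N + 6) * l t ^ 2 = 0 := by
  have hT' : ∀ t ∈ U, deriv T t = 2 / 3 * N * ((N + 3) / 3 * l t * m t) := fun t ht =>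
    (((hl t ht).const_mul (2 / 3 * N)).congr_of_eventuallyEq
      (eventuallyEq_of_mem (hU.mem_nhds ht) hT)).deriv
  intro t ht
  have hT'' : deriv (deriv T) t = 2 / 3 * N * ((N + 3) / 3 *
      ((N + 3) / 3 * l t * m t * m t + l t * (m t ^ 2 - N / 3 * l t ^ 2))) :=
    ((((hl t ht).fun_mul (hm t ht)).const_mul _).const_mul _ |>.congr_of_eventuallyEq
      (eventuallyEq_of_mem (hU.mem_nhds ht) fun s hs => by rw [hT' s hs]; ring)).deriv
  have key : N * l t * ((N + 3) * (N - 3) * m t ^ 2 + N * (N + 6) * l t ^ 2) = 0 := by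
    have := h3 t ht
    rw [hT'', hT' t ht, hT t ht] at this
    linear_combination (27 / 4) * this
  exact (mul_eq_zero.mp key).resolve_left (mul_ne_zero hN (hl0 t ht))

theorem reduced_mu_eq_zero (hN : 0 < N) (hU : IsOpen U)
    (hl : ∀ t ∈ U, HasDerivAt l ((N + 3) / 3 * l t * m t) t)
    (hm : ∀ t ∈ U, HasDerivAt m (m t ^ 2 - N / 3 * l t ^ 2) t)
    (hl0 : ∀ t ∈ U, l t ≠ 0)
    (hH : ∀ t ∈ U, (N + 3) * (N - 3) * m t ^ 2 + N * (N + 6) * l t ^ 2 = 0) :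
    ∀ t ∈ U, m t = 0 := by
  intro t ht
  have hH' := HasDerivAt.eq_zero_of_eqOn_const hU ht
    ((((hm t ht).pow 2).const_mul ((N + 3) * (N - 3))).add
      (((hl t ht).pow 2).const_mul (N * (N + 6)))) hH
  have key : m t * (N * (2 * N + 3) * l t ^ 2) = 0 := by
    push_cast at hH'
    linear_combination (1 / 2) * hH' - m t * hH t ht
  have := hl0 t ht
  exact (mul_eq_zero.mp key).resolve_right (by positivity)

theorem reduced_lam_eq_zero (hN : N ≠ 0) (hU : IsOpen U)
    (hm : ∀ t ∈ U, HasDerivAt m (m t ^ 2 - N / 3 * l t ^ 2) t) (hm0 : ∀ t ∈ U, m t = 0) :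
    ∀ t ∈ U, l t = 0 := by
  intro t ht
  have hm' := HasDerivAt.eq_zero_of_eqOn_const hU ht (hm t ht) hm0
  rw [hm0 t ht] at hm'
  have : N * l t ^ 2 = 0 := by linear_combination (-3) * hm'
  exact pow_eq_zero_iff two_ne_zero |>.mp ((mul_eq_zero.mp this).resolve_left hN)

end ReducedSystem

theorem lam_eq_of_mu_eq {n₁ : ℕ} {K : ℝ} {I : Set ℝ} (hI : IsOpen I)
    {lam mu : Fin n₁ → ℝ → ℝ} {tau : ℝ → ℝ}
    (hode2 : ∀ i, ∀ t ∈ I,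
      HasDerivAt (mu i) ((mu i t) ^ 2 - tau t / 2 * lam i t + K) t)
    (hall : ∀ i j : Fin n₁, ∀ t ∈ I, mu i t = mu j t)
    {t : ℝ} (ht : t ∈ I) (htau : tau t ≠ 0) (i j : Fin n₁) : lam i t = lam j t := by
  have hderiv := (hode2 i t ht).unique <| (hode2 j t ht).congr_of_eventuallyEq <|
    eventuallyEq_of_mem (hI.mem_nhds ht) fun s hs => hall i j s hs
  rw [hall i j t ht] at hderiv
  exact mul_left_cancel₀ (div_ne_zero htau two_ne_zero) (by linarith)

theorem stmt_9_general (n₁ : ℕ) (K : ℝ) (hK : K = 0)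
    (I : Set ℝ) (hI : IsOpen I)
    (lam mu : Fin n₁ → ℝ → ℝ)
    (tau : ℝ → ℝ) (htau : ∀ t, tau t = (2/3) * ∑ i, lam i t)
    (hode1 : ∀ i, ∀ t ∈ I, HasDerivAt (lam i) ((tau t / 2 + lam i t) * mu i t) t)
    (hode2 : ∀ i, ∀ t ∈ I,
      HasDerivAt (mu i) ((mu i t) ^ 2 - tau t / 2 * lam i t + K) t)
    (hode3 : ∀ t ∈ I,
      -(deriv (deriv tau) t) + deriv tau t * (∑ i, mu i t)
        + tau t * ((tau t) ^ 2 / 4 - ((n₁ : ℝ) + 1) * K + ∑ i, (lam i t) ^ 2) = 0)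
    (hall : ∀ i j : Fin n₁, ∀ t ∈ I, mu i t = mu j t) :
    ∀ t ∈ I, tau t = 0 := by
  subst hK
  by_contra! ⟨t₀, ht₀I, ht₀⟩
  obtain ⟨i₀, -, -⟩ : ∃ i ∈ univ, lam i t₀ ≠ 0 :=
    exists_ne_zero_of_sum_ne_zero fun h => ht₀ (by rw [htau, h, mul_zero])
  have hN : (0 : ℝ) < n₁ := by exact_mod_cast i₀.pos
  set U := I ∩ tau ⁻¹' {0}ᶜ
  have hU : IsOpen U := by
    refine ContinuousOn.isOpen_inter_preimage ?_ hI isOpen_compl_singleton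
    rw [show tau = fun t => 2 / 3 * ∑ i, lam i t from funext htau]
    exact continuousOn_const.mul <| continuousOn_finsetSum _ fun i _ t ht =>
      (hode1 i t ht).continuousAt.continuousWithinAt
  have hlam : ∀ t ∈ U, ∀ i, lam i t = lam i₀ t := fun t ht i =>
    lam_eq_of_mu_eq hI hode2 hall ht.1 ht.2 i i₀
  have hmu : ∀ t ∈ U, ∀ i, mu i t = mu i₀ t := fun t ht i => hall i i₀ t ht.1
  have htauU : ∀ t ∈ U, tau t = 2 / 3 * n₁ * lam i₀ t := fun t ht => by
    simp only [htau, hlam t ht, sum_const, card_univ, Fintype.card_fin, nsmul_eq_mul]; ring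
  have hl0 : ∀ t ∈ U, lam i₀ t ≠ 0 := fun t ht h =>
    ht.2 (show tau t = 0 by rw [htauU t ht, h, mul_zero])
  have hl : ∀ t ∈ U, HasDerivAt (lam i₀) ((n₁ + 3) / 3 * lam i₀ t * mu i₀ t) t :=
    fun t ht => by convert hode1 i₀ t ht.1 using 1; rw [htauU t ht]; ring
  have hm : ∀ t ∈ U, HasDerivAt (mu i₀) (mu i₀ t ^ 2 - n₁ / 3 * lam i₀ t ^ 2) t :=
    fun t ht => by convert hode2 i₀ t ht.1 using 1; rw [htauU t ht]; ring
  have h3 : ∀ t ∈ U, -(deriv (deriv tau) t) + deriv tau t * (n₁ * mu i₀ t)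
      + tau t * (tau t ^ 2 / 4 + n₁ * lam i₀ t ^ 2) = 0 := fun t ht => by
    simpa [hlam t ht, hmu t ht] using hode3 t ht.1
  have hH := reduced_quadric_eq_zero hN.ne' hU hl hm hl0 htauU h3
  have hm0 := reduced_mu_eq_zero hN hU hl hm hl0 hH
  exact hl0 t₀ ⟨ht₀I, ht₀⟩ (reduced_lam_eq_zero hN.ne' hU hm hm0 t₀ ⟨ht₀I, ht₀⟩)

/-- Lemma (`vp ≠ 0`, case φ ≡ 0): a real-analytic solution of the ODE system
with `K = 0` in which all the `μᵢ` coincide must have `τ ≡ 0`. -/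
theorem stmt_9 (n₁ : ℕ) (hn : 1 ≤ n₁) (K : ℝ) (hK : K = 0)
    (I : Set ℝ) (hI : IsOpen I) (hIconn : I.OrdConnected)
    (lam mu : Fin n₁ → ℝ → ℝ)
    (hlam : ∀ i, AnalyticOnNhd ℝ (lam i) I)
    (hmu : ∀ i, AnalyticOnNhd ℝ (mu i) I)
    (tau : ℝ → ℝ) (htau : ∀ t, tau t = (2/3) * ∑ i, lam i t)
    (hode1 : ∀ i, ∀ t ∈ I, HasDerivAt (lam i) ((tau t / 2 + lam i t) * mu i t) t)
    (hode2 : ∀ i, ∀ t ∈ I,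
      HasDerivAt (mu i) ((mu i t) ^ 2 - tau t / 2 * lam i t + K) t)
    (hode3 : ∀ t ∈ I,
      -(deriv (deriv tau) t) + deriv tau t * (∑ i, mu i t)
        + tau t * ((tau t) ^ 2 / 4 - ((n₁ : ℝ) + 1) * K + ∑ i, (lam i t) ^ 2) = 0)
    (hall : ∀ i j : Fin n₁, ∀ t ∈ I, mu i t = mu j t) :
    ∀ t ∈ I, tau t = 0 :=
  stmt_9_general n₁ K hK I hI lam mu tau htau hode1 hode2 hode3 hall
end

section
/- Let n₁ ≥ 1 and K = 0, let (λ₁,…,λ_{n₁}, μ₁,…,μ_{n₁}) be a real-analytic solution of the system (ODE) on an open interval I, and suppose there are real-analytic functions φ, ψ on I with μᵢ = φλᵢ + ψ for all i and φ(t) ≠ 0 for all t ∈ I. Then τ satisfies on I the second-order equation: τ'' − (n₁ψ + 3τ(φ² + 1)/(2φ))·τ' + τ²·(τφ + (n₁+3)ψ)/(2φ) = 0. -/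
/-!
At each point the claim is pure algebra. Write `L = Σ λᵢ = 3τ/2` and `S = Σ λᵢ²`. Equation (iii)
with `K = 0` gives `τ'' = τ' Σ μᵢ + τ (τ²/4 + S)`, and differentiating `τ` with (i) gives
`τ' = (2/3) Σ (τ/2 + λᵢ) μᵢ`. Substituting `μᵢ = φλᵢ + ψ`, both sums become linear in `L` and `S`;
eliminating `S` between the two equations (possible since `φ ≠ 0`) leaves the stated equation.
-/

open Finset

section LinearRelation

variable {ι : Type*} [Fintype ι] (lam : ι → ℝ) (φ ψ c : ℝ)

lemma sum_linear_relation :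
    ∑ i, (φ * lam i + ψ) = φ * ∑ i, lam i + Fintype.card ι * ψ := by
  simp only [sum_add_distrib, ← mul_sum, sum_const, card_univ, nsmul_eq_mul]

lemma sum_shift_mul_linear_relation :
    ∑ i, (c + lam i) * (φ * lam i + ψ)
      = φ * ∑ i, lam i ^ 2 + (c * φ + ψ) * ∑ i, lam i + Fintype.card ι * (c * ψ) := by
  have expand : ∀ i, (c + lam i) * (φ * lam i + ψ) = φ * lam i ^ 2 + (c * φ + ψ) * lam i + c * ψ :=
    fun i => by ring
  simp only [expand, sum_add_distrib, ← mul_sum, sum_const, card_univ, nsmul_eq_mul]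
  ring

end LinearRelation

/-- `T, A, B` stand for `τ, τ', τ''` at a point, and `L, S` for `Σ λᵢ, Σ λᵢ²` there. -/
lemma tau_equation_of_sums {n φ ψ T A B L S : ℝ} (hφ : φ ≠ 0) (hL : L = 3 / 2 * T)
    (hA : A = 2 / 3 * (φ * S + (T / 2 * φ + ψ) * L + n * (T / 2 * ψ)))
    (hB : B = A * (φ * L + n * ψ) + T * (T ^ 2 / 4 + S)) :
    B - (n * ψ + 3 * T * (φ ^ 2 + 1) / (2 * φ)) * A
      + T ^ 2 * (T * φ + (n + 3) * ψ) / (2 * φ) = 0 := by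
  have hS : φ * S = 3 / 2 * A - 3 / 4 * T ^ 2 * φ - 3 / 2 * T * ψ - n / 2 * T * ψ := by
    rw [hA, hL]; ring
  field_simp
  linear_combination 2 * φ * hB + 2 * φ * A * φ * hL + 2 * T * hS

theorem stmt_12_general (n₁ : ℕ) (K : ℝ) (hK : K = 0)
    (I : Set ℝ)
    (lam mu : Fin n₁ → ℝ → ℝ)
    (tau : ℝ → ℝ) (htau : ∀ t, tau t = (2/3) * ∑ i, lam i t)
    (hode1 : ∀ i, ∀ t ∈ I, HasDerivAt (lam i) ((tau t / 2 + lam i t) * mu i t) t)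
    (hode3 : ∀ t ∈ I,
      -(deriv (deriv tau) t) + deriv tau t * (∑ i, mu i t)
        + tau t * ((tau t) ^ 2 / 4 - ((n₁ : ℝ) + 1) * K + ∑ i, (lam i t) ^ 2) = 0)
    (phi psi : ℝ → ℝ)
    (hlin : ∀ i, ∀ t ∈ I, mu i t = phi t * lam i t + psi t)
    (hphi_ne : ∀ t ∈ I, phi t ≠ 0) :
    ∀ t ∈ I,
      deriv (deriv tau) t
        - ((n₁ : ℝ) * psi t + 3 * tau t * ((phi t) ^ 2 + 1) / (2 * phi t))
          * deriv tau t
        + (tau t) ^ 2 * (tau t * phi t + ((n₁ : ℝ) + 3) * psi t) / (2 * phi t)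
        = 0 := by
  subst hK
  intro t ht
  have hmu_sum : ∑ i, mu i t = phi t * ∑ i, lam i t + n₁ * psi t := by
    simpa [hlin _ t ht] using sum_linear_relation (lam · t) (phi t) (psi t)
  have htau_deriv : HasDerivAt tau ((2 / 3) * ∑ i, (tau t / 2 + lam i t) * mu i t) t := by
    have := (HasDerivAt.fun_sum (u := univ) fun i _ => hode1 i t ht).const_mul (2 / 3 : ℝ)
    rwa [← funext htau] at this
  have hweighted_sum : ∑ i, (tau t / 2 + lam i t) * mu i t
      = phi t * ∑ i, lam i t ^ 2 + (tau t / 2 * phi t + psi t) * ∑ i, lam i t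
        + n₁ * (tau t / 2 * psi t) := by
    simpa [hlin _ t ht] using
      sum_shift_mul_linear_relation (lam · t) (phi t) (psi t) (tau t / 2)
  refine tau_equation_of_sums (hphi_ne t ht) (L := ∑ i, lam i t) ?_
    (by rw [htau_deriv.deriv, hweighted_sum]) ?_
  · rw [htau t]; ring
  · rw [← hmu_sum]; linear_combination -hode3 t ht

/-- Lemma (`dtau`): for a solution of the ODE system with `K = 0` admitting a
linear relation `μᵢ = φλᵢ + ψ` with `φ ≠ 0`, the function `τ` satisfies
`τ'' - (n₁ψ + 3τ(φ²+1)/(2φ))τ' + τ²(τφ + (n₁+3)ψ)/(2φ) = 0`. -/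
theorem stmt_12 (n₁ : ℕ) (hn : 1 ≤ n₁) (K : ℝ) (hK : K = 0)
    (I : Set ℝ) (hI : IsOpen I) (hIconn : I.OrdConnected)
    (lam mu : Fin n₁ → ℝ → ℝ)
    (hlam : ∀ i, AnalyticOnNhd ℝ (lam i) I)
    (hmu : ∀ i, AnalyticOnNhd ℝ (mu i) I)
    (tau : ℝ → ℝ) (htau : ∀ t, tau t = (2/3) * ∑ i, lam i t)
    (hode1 : ∀ i, ∀ t ∈ I, HasDerivAt (lam i) ((tau t / 2 + lam i t) * mu i t) t)
    (hode2 : ∀ i, ∀ t ∈ I,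
      HasDerivAt (mu i) ((mu i t) ^ 2 - tau t / 2 * lam i t + K) t)
    (hode3 : ∀ t ∈ I,
      -(deriv (deriv tau) t) + deriv tau t * (∑ i, mu i t)
        + tau t * ((tau t) ^ 2 / 4 - ((n₁ : ℝ) + 1) * K + ∑ i, (lam i t) ^ 2) = 0)
    (phi psi : ℝ → ℝ)
    (hphi : AnalyticOnNhd ℝ phi I) (hpsi : AnalyticOnNhd ℝ psi I)
    (hlin : ∀ i, ∀ t ∈ I, mu i t = phi t * lam i t + psi t)
    (hphi_ne : ∀ t ∈ I, phi t ≠ 0) :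
    ∀ t ∈ I,
      deriv (deriv tau) t
        - ((n₁ : ℝ) * psi t + 3 * tau t * ((phi t) ^ 2 + 1) / (2 * phi t))
          * deriv tau t
        + (tau t) ^ 2 * (tau t * phi t + ((n₁ : ℝ) + 3) * psi t) / (2 * phi t)
        = 0 :=
  stmt_12_general n₁ K hK I lam mu tau htau hode1 hode3 phi psi hlin hphi_ne
end

section
/- Let n₁ = 1 and K ≤ 0, and let (λ₁, μ₁) be a real-analytic solution of the system (ODE) on an open interval I (so τ = (2/3)λ₁ and the system reads: λ₁' = (τ/2 + λ₁)μ₁, μ₁' = μ₁² − (τ/2)λ₁ + K, and −τ'' + τ'μ₁ + τ(τ²/4 − 2K + λ₁²) = 0). Then λ₁ ≡ 0 on I, i.e., τ ≡ 0. -/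
/-- Chen–Jiang theorem via the ODE system (`n₁ = 1`): for `K ≤ 0`, every
real-analytic solution of the system has `λ₁ ≡ 0`, i.e. `τ ≡ 0`. -/
theorem stmt_17 (K : ℝ) (hK : K ≤ 0)
    (I : Set ℝ) (hI : IsOpen I) (hIconn : I.OrdConnected)
    (lam mu : ℝ → ℝ)
    (hlam : AnalyticOnNhd ℝ lam I) (hmu : AnalyticOnNhd ℝ mu I)
    (tau : ℝ → ℝ) (htau : ∀ t, tau t = (2/3) * lam t)
    (hode1 : ∀ t ∈ I, HasDerivAt lam ((tau t / 2 + lam t) * mu t) t)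
    (hode2 : ∀ t ∈ I, HasDerivAt mu ((mu t) ^ 2 - tau t / 2 * lam t + K) t)
    (hode3 : ∀ t ∈ I,
      -(deriv (deriv tau) t) + deriv tau t * mu t
        + tau t * ((tau t) ^ 2 / 4 - 2 * K + (lam t) ^ 2) = 0) :
    ∀ t ∈ I, lam t = 0 := by
  have htau' : tau = fun s => (2/3) * lam s := funext htau
  -- derivative of tau on I
  have hdtau : ∀ t ∈ I, HasDerivAt tau ((2/3) * ((tau t / 2 + lam t) * mu t)) t := by
    intro t ht
    have h := (hode1 t ht).const_mul (2/3 : ℝ)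
    exact h.congr_of_eventuallyEq (Filter.Eventually.of_forall htau)
  have hderiv_tau : ∀ t ∈ I, deriv tau t = (8/9) * (lam t * mu t) := by
    intro t ht
    rw [(hdtau t ht).deriv, htau t]; ring
  -- key pointwise algebraic identity on I
  have key : ∀ t ∈ I, lam t * (8 * (mu t)^2 - 7 * (lam t)^2 + 15 * K) = 0 := by
    intro t ht
    have hg : HasDerivAt (fun s => (8/9) * (lam s * mu s))
        ((8/9) * (((tau t / 2 + lam t) * mu t) * mu t
          + lam t * ((mu t) ^ 2 - tau t / 2 * lam t + K))) t :=
      ((hode1 t ht).mul (hode2 t ht)).const_mul (8/9 : ℝ)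
    have heq : deriv tau =ᶠ[nhds t] fun s => (8/9) * (lam s * mu s) :=
      Filter.eventuallyEq_of_mem (hI.mem_nhds ht) (fun s hs => hderiv_tau s hs)
    have hd2 : deriv (deriv tau) t = (8/9) * (((tau t / 2 + lam t) * mu t) * mu t
          + lam t * ((mu t) ^ 2 - tau t / 2 * lam t + K)) := by
      rw [heq.deriv_eq, hg.deriv]
    have h3 := hode3 t ht
    rw [hd2, hderiv_tau t ht, htau t] at h3
    linear_combination (-27/4 : ℝ) * h3
  -- pointwise contradiction on the set where lam ≠ 0
  intro t ht
  by_contra hne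
  set U : Set ℝ := {s | s ∈ I ∧ lam s ≠ 0} with hU
  have htU : t ∈ U := ⟨ht, hne⟩
  have hUnhds : ∀ s ∈ U, U ∈ nhds s := by
    intro s hs
    have h1 : I ∈ nhds s := hI.mem_nhds hs.1
    have h2 : lam ⁻¹' ({0}ᶜ) ∈ nhds s :=
      (hlam s hs.1).continuousAt.preimage_mem_nhds
        (isOpen_compl_singleton.mem_nhds hs.2)
    filter_upwards [h1, h2] with x hx1 hx2
    exact ⟨hx1, hx2⟩
  -- F := 8 μ² − 7 λ² + 15 K vanishes on U
  have hF0 : ∀ s ∈ U, 8 * (mu s)^2 - 7 * (lam s)^2 + 15 * K = 0 := by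
    intro s hs
    have := key s hs.1
    rcases mul_eq_zero.mp this with h | h
    · exact absurd h hs.2
    · exact h
  -- derivative of F at t is 0 (F locally zero) and also the computed expression
  have hFconst : HasDerivAt (fun s => 8 * (mu s)^2 - 7 * (lam s)^2 + 15 * K) 0 t := by
    have heq : (fun s => 8 * (mu s)^2 - 7 * (lam s)^2 + 15 * K)
        =ᶠ[nhds t] fun _ => (0:ℝ) :=
      Filter.eventuallyEq_of_mem (hUnhds t htU) (fun s hs => hF0 s hs)
    exact (hasDerivAt_const t (0:ℝ)).congr_of_eventuallyEq heq
  have hFderiv : HasDerivAt (fun s => 8 * (mu s)^2 - 7 * (lam s)^2 + 15 * K)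
      (8 * (2 * mu t ^ 1 * ((mu t) ^ 2 - tau t / 2 * lam t + K))
        - 7 * (2 * lam t ^ 1 * ((tau t / 2 + lam t) * mu t))) t := by
    exact ((((hode2 t ht).pow 2).const_mul (8:ℝ)).sub
      (((hode1 t ht).pow 2).const_mul (7:ℝ))).add_const (15 * K)
  have hrel : 8 * (2 * mu t ^ 1 * ((mu t) ^ 2 - tau t / 2 * lam t + K))
        - 7 * (2 * lam t ^ 1 * ((tau t / 2 + lam t) * mu t)) = 0 :=
    hFderiv.unique hFconst
  rw [htau t] at hrel
  -- μ t ≠ 0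
  have hmu0 : mu t ≠ 0 := by
    intro h0
    have hF := hF0 t htU
    rw [h0] at hF
    have hlsq : (lam t)^2 > 0 := by positivity
    nlinarith
  -- hence 2μ² − 3λ² + 2K = 0 at t, and combined with F = 0 : 5λ² + 7K = 0 on U
  have hG : 2 * (mu t)^2 - 3 * (lam t)^2 + 2 * K = 0 := by
    have h8 : (8 : ℝ) * mu t ≠ 0 := by
      simp [hmu0]
    have : (8 * mu t) * (2 * (mu t)^2 - 3 * (lam t)^2 + 2 * K) = 0 := by
      linear_combination hrel
    exact (mul_eq_zero.mp this).resolve_left h8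
  -- 5 λ² + 7 K = 0 holds on all of U (same argument pointwise)
  have hconst : ∀ s ∈ U, 5 * (lam s)^2 + 7 * K = 0 := by
    intro s hs
    have hFs := hF0 s hs
    -- redo the derivative argument at s
    have hFconst_s : HasDerivAt (fun u => 8 * (mu u)^2 - 7 * (lam u)^2 + 15 * K) 0 s := by
      have heq : (fun u => 8 * (mu u)^2 - 7 * (lam u)^2 + 15 * K)
          =ᶠ[nhds s] fun _ => (0:ℝ) :=
        Filter.eventuallyEq_of_mem (hUnhds s hs) (fun u hu => hF0 u hu)
      exact (hasDerivAt_const s (0:ℝ)).congr_of_eventuallyEq heq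
    have hFderiv_s : HasDerivAt (fun u => 8 * (mu u)^2 - 7 * (lam u)^2 + 15 * K)
        (8 * (2 * mu s ^ 1 * ((mu s) ^ 2 - tau s / 2 * lam s + K))
          - 7 * (2 * lam s ^ 1 * ((tau s / 2 + lam s) * mu s))) s :=
      ((((hode2 s hs.1).pow 2).const_mul (8:ℝ)).sub
        (((hode1 s hs.1).pow 2).const_mul (7:ℝ))).add_const (15 * K)
    have hrel_s := hFderiv_s.unique hFconst_s
    rw [htau s] at hrel_s
    have hmu0_s : mu s ≠ 0 := by
      intro h0
      rw [h0] at hFs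
      have hlsq : (lam s)^2 > 0 := lt_of_le_of_ne (sq_nonneg _) (Ne.symm (pow_ne_zero 2 hs.2))
      nlinarith
    have hG_s : 2 * (mu s)^2 - 3 * (lam s)^2 + 2 * K = 0 := by
      have h8 : (8 : ℝ) * mu s ≠ 0 := by simp [hmu0_s]
      have : (8 * mu s) * (2 * (mu s)^2 - 3 * (lam s)^2 + 2 * K) = 0 := by
        linear_combination hrel_s
      exact (mul_eq_zero.mp this).resolve_left h8
    linarith
  -- λ² is locally constant on U, so its derivative vanishes: λ²μ = 0, contradiction
  have hLconst : HasDerivAt (fun s => 5 * (lam s)^2 + 7 * K) 0 t := by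
    have heq : (fun s => 5 * (lam s)^2 + 7 * K) =ᶠ[nhds t] fun _ => (0:ℝ) :=
      Filter.eventuallyEq_of_mem (hUnhds t htU) (fun s hs => hconst s hs)
    exact (hasDerivAt_const t (0:ℝ)).congr_of_eventuallyEq heq
  have hLderiv : HasDerivAt (fun s => 5 * (lam s)^2 + 7 * K)
      (5 * (2 * lam t ^ 1 * ((tau t / 2 + lam t) * mu t))) t :=
    (((hode1 t ht).pow 2).const_mul (5:ℝ)).add_const (7 * K)
  have hzero := hLderiv.unique hLconst
  rw [htau t] at hzero
  have : (lam t)^2 * mu t = 0 := by linear_combination (3/40 : ℝ) * hzero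
  rcases mul_eq_zero.mp this with h | h
  · exact hne (pow_eq_zero_iff two_ne_zero |>.mp h)
  · exact hmu0 h
end

section
/- Let n₁ ≥ 1 be an integer and b₁,…,b_{n₁} ∈ ℝ. For each integer k ≥ 1 define s_k(x) := Σ_{i=1}^{n₁} (x + bᵢ)^{−k} for x ∈ ℝ with x + bᵢ ≠ 0 for all i. Suppose that the function Q := −4s₁⁵s₂ + 12s₁³s₂² − 18s₁⁴s₃ + 63s₁²s₂s₃ + 54s₂²s₃ + 162s₁s₃² − 27s₁³s₄ − 162s₁s₂s₄ vanishes for every x in its domain. Then n₁ = 3 and b₁ = b₂ = b₃. -/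
/-!
Weight `s_k` by `k`; then `Q` is homogeneous of weight `7`. If `g^k s_k → m` for `k = 1, …, 4`
along some filter, then `g^7 Q → Q(m, m, m, m) = -2m³(m - 3)(m + 3)(2m + 3)`, so `Q ≡ 0` forces
`m ∈ {0, 3}`. At `x → ∞` with `g = x` the limit is `m = n₁`; at the pole `x → -bᵢ` with
`g = x + bᵢ` it is the multiplicity of `bᵢ`. Both are positive, hence both equal `3`.
-/

open Filter Topology

noncomputable def powerSum {ι : Type*} [Fintype ι] (b : ι → ℝ) (k : ℕ) (x : ℝ) : ℝ :=
  ∑ i, ((x + b i)⁻¹) ^ k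

noncomputable def qForm (s1 s2 s3 s4 : ℝ) : ℝ :=
  -4 * s1 ^ 5 * s2 + 12 * s1 ^ 3 * s2 ^ 2
    - 18 * s1 ^ 4 * s3 + 63 * s1 ^ 2 * s2 * s3
    + 54 * s2 ^ 2 * s3 + 162 * s1 * s3 ^ 2
    - 27 * s1 ^ 3 * s4 - 162 * s1 * s2 * s4

lemma qForm_weighted (g s1 s2 s3 s4 : ℝ) :
    qForm (g * s1) (g ^ 2 * s2) (g ^ 3 * s3) (g ^ 4 * s4) = g ^ 7 * qForm s1 s2 s3 s4 := by
  unfold qForm; ring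

lemma qForm_diag (m : ℝ) : qForm m m m m = -2 * m ^ 3 * (m - 3) * (m + 3) * (2 * m + 3) := by
  unfold qForm; ring

lemma continuous_qForm :
    Continuous fun p : ℝ × ℝ × ℝ × ℝ => qForm p.1 p.2.1 p.2.2.1 p.2.2.2 := by
  unfold qForm; fun_prop

lemma eq_three_of_qForm_diag_eq_zero {m : ℕ} (hm : 1 ≤ m) (h : qForm m m m m = 0) : m = 3 := by
  rw [qForm_diag] at h
  have h3 : ((m : ℝ) - 3) * (2 * (m : ℝ) ^ 3 * ((m : ℝ) + 3) * (2 * (m : ℝ) + 3)) = 0 := by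
    linear_combination -h
  have hpos : 0 < 2 * (m : ℝ) ^ 3 * ((m : ℝ) + 3) * (2 * (m : ℝ) + 3) := by positivity
  exact_mod_cast sub_eq_zero.1 ((mul_eq_zero.1 h3).resolve_right hpos.ne')

lemma qForm_diag_eq_zero_of_tendsto {l : Filter ℝ} [l.NeBot] {g : ℝ → ℝ} {s : ℕ → ℝ → ℝ}
    {m : ℝ} (hlim : ∀ k, 1 ≤ k → Tendsto (fun x => g x ^ k * s k x) l (𝓝 m))
    (hq : ∀ᶠ x in l, qForm (s 1 x) (s 2 x) (s 3 x) (s 4 x) = 0) :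
    qForm m m m m = 0 := by
  have hlim1 : Tendsto (fun x => g x * s 1 x) l (𝓝 m) := by simpa using hlim 1 le_rfl
  have hvec : Tendsto (fun x => (g x * s 1 x, g x ^ 2 * s 2 x, g x ^ 3 * s 3 x, g x ^ 4 * s 4 x))
      l (𝓝 (m, m, m, m)) :=
    hlim1.prodMk_nhds <| (hlim 2 (by norm_num)).prodMk_nhds <|
      (hlim 3 (by norm_num)).prodMk_nhds (hlim 4 (by norm_num))
  refine tendsto_nhds_unique ((continuous_qForm.tendsto (m, m, m, m)).comp hvec)
    (tendsto_const_nhds.congr' ?_)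
  filter_upwards [hq] with x hx
  simp only [Function.comp_apply]
  rw [qForm_weighted, hx, mul_zero]

lemma tendsto_mul_inv_add_atTop (c : ℝ) : Tendsto (fun x : ℝ => x * (x + c)⁻¹) atTop (𝓝 1) := by
  have h0 : Tendsto (fun x : ℝ => (x + c)⁻¹) atTop (𝓝 0) :=
    tendsto_inv_atTop_zero.comp (tendsto_atTop_add_const_right atTop c tendsto_id)
  have h1 : Tendsto (fun x : ℝ => 1 - c * (x + c)⁻¹) atTop (𝓝 1) := by
    simpa using tendsto_const_nhds.sub (tendsto_const_nhds.mul h0)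
  refine h1.congr' ?_
  filter_upwards [eventually_gt_atTop (-c)] with x hx
  have hne : x + c ≠ 0 := by linarith
  field_simp
  ring

section powerSum

variable {ι : Type*} [Fintype ι] (b : ι → ℝ)

lemma pow_mul_powerSum (g : ℝ) (k : ℕ) (x : ℝ) :
    g ^ k * powerSum b k x = ∑ i, (g * (x + b i)⁻¹) ^ k := by
  simp only [powerSum, Finset.mul_sum, mul_pow]

lemma tendsto_pow_mul_powerSum_atTop (k : ℕ) :
    Tendsto (fun x => x ^ k * powerSum b k x) atTop (𝓝 (Fintype.card ι)) := by
  have h := tendsto_finsetSum Finset.univ fun i _ => (tendsto_mul_inv_add_atTop (b i)).pow k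
  simp only [one_pow, Finset.sum_const, Finset.card_univ, nsmul_eq_mul, mul_one] at h
  simpa only [pow_mul_powerSum] using h

lemma tendsto_pow_mul_powerSum_nhdsNE (c : ℝ) (k : ℕ) (hk : 1 ≤ k) :
    Tendsto (fun x => (x + c) ^ k * powerSum b k x) (𝓝[≠] (-c))
      (𝓝 (Finset.univ.filter fun i => b i = c).card) := by
  simp only [pow_mul_powerSum, ← Finset.sum_boole]
  refine tendsto_finsetSum _ fun i _ => ?_
  by_cases hbc : b i = c
  · rw [if_pos hbc]
    refine tendsto_const_nhds.congr' ?_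
    filter_upwards [self_mem_nhdsWithin] with x hx
    have hne : x + c ≠ 0 := fun h => hx (by simp only [Set.mem_singleton_iff]; linarith)
    rw [hbc, mul_inv_cancel₀ hne, one_pow]
  · rw [if_neg hbc]
    have hcont : ContinuousAt (fun x : ℝ => ((x + c) * (x + b i)⁻¹) ^ k) (-c) :=
      ((continuous_add_const c).continuousAt.mul
        ((continuous_add_const (b i)).continuousAt.inv₀ fun h => hbc (by linarith))).pow k
    simpa [zero_pow (by omega : k ≠ 0)] using hcont.tendsto.mono_left nhdsWithin_le_nhds

lemma eventually_ne_pole_atTop : ∀ᶠ x in atTop, ∀ i, x + b i ≠ 0 :=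
  eventually_all.2 fun i =>
    (eventually_gt_atTop (-b i)).mono fun x hx => by linarith

lemma eventually_ne_pole_nhdsNE (c : ℝ) : ∀ᶠ x in 𝓝[≠] (-c), ∀ i, x + b i ≠ 0 := by
  refine eventually_all.2 fun i => ?_
  by_cases hbc : b i = c
  · filter_upwards [self_mem_nhdsWithin] with x hx
    exact fun h => hx (by simp only [Set.mem_singleton_iff]; linarith)
  · have ht : Tendsto (fun x : ℝ => x + b i) (𝓝[≠] (-c)) (𝓝 (-c + b i)) :=
      ((continuous_add_const (b i)).tendsto (-c)).mono_left nhdsWithin_le_nhds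
    exact ht.eventually_ne fun h => hbc (by linarith)

end powerSum

/-- If the rational expression `Q` in the power sums `s_k(x) = Σᵢ (x + bᵢ)⁻ᵏ`
vanishes identically, then `n₁ = 3` and all the `bᵢ` are equal. -/
theorem stmt_18 (n₁ : ℕ) (hn : 1 ≤ n₁) (b : Fin n₁ → ℝ)
    (s : ℕ → ℝ → ℝ) (hs : ∀ k x, s k x = ∑ i, ((x + b i)⁻¹) ^ k)
    (hQ : ∀ x : ℝ, (∀ i, x + b i ≠ 0) →
      -4 * (s 1 x) ^ 5 * s 2 x + 12 * (s 1 x) ^ 3 * (s 2 x) ^ 2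
        - 18 * (s 1 x) ^ 4 * s 3 x + 63 * (s 1 x) ^ 2 * s 2 x * s 3 x
        + 54 * (s 2 x) ^ 2 * s 3 x + 162 * s 1 x * (s 3 x) ^ 2
        - 27 * (s 1 x) ^ 3 * s 4 x - 162 * s 1 x * s 2 x * s 4 x = 0) :
    n₁ = 3 ∧ ∀ i j, b i = b j := by
  obtain rfl : s = powerSum b := funext fun k => funext (hs k)
  have hn₁ : n₁ = 3 := by
    refine eq_three_of_qForm_diag_eq_zero hn ?_
    refine qForm_diag_eq_zero_of_tendsto (g := id) (fun k _ => ?_)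
      ((eventually_ne_pole_atTop b).mono hQ)
    simpa using tendsto_pow_mul_powerSum_atTop b k
  refine ⟨hn₁, fun i j => ?_⟩
  have hmult : (Finset.univ.filter fun k => b k = b i).card = 3 := by
    refine eq_three_of_qForm_diag_eq_zero (Finset.card_pos.2 ⟨i, by simp⟩) ?_
    exact qForm_diag_eq_zero_of_tendsto (tendsto_pow_mul_powerSum_nhdsNE b (b i))
      ((eventually_ne_pole_nhdsNE b (b i)).mono hQ)
  have hall : (Finset.univ.filter fun k => b k = b i) = Finset.univ :=
    Finset.eq_univ_of_card _ (by rw [hmult, hn₁, Fintype.card_fin])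
  exact (Finset.filter_eq_self.1 hall j (Finset.mem_univ j)).symm
end
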